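/- arXiv:1404.1185 — 7 statements merged into one kernel-verified Lean document; each statement's English description precedes it below -/
import Mathlib

section
/- Let $T : X \to Y$ be a bounded linear operator between Banach spaces such that the range of the adjoint $T^* : Y^* \to X^*$ contains a boundary $B$ of $X$. Then $T^*(Y^*)$ is norm-dense in $X^*$. -/
open NormedSpace Filter Topology Pointwise

section Aux

variable {X Y : Type*} [NormedAddCommGroup X] [NormedSpace ℝ X]
  [NormedAddCommGroup Y] [NormedSpace ℝ Y]

/-- Hahn–Banach factorization: if `f₀ ≤ β‖·‖ + c‖T·‖` then `f₀` is within `β`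
of the range of `T*`. -/
lemma exists_factor (T : X →L[ℝ] Y) (f₀ : StrongDual ℝ X) (β c : ℝ) (hβ : 0 ≤ β) (hc : 0 ≤ c)
    (h : ∀ x, f₀ x ≤ β * ‖x‖ + c * ‖T x‖) :
    ∃ g : StrongDual ℝ Y, ‖f₀ - g.comp T‖ ≤ β := by
  set F : Y → X → ℝ := fun y x => c * ‖y - T x‖ + β * ‖x‖ - f₀ x with hF
  have hlb : ∀ y x, -(c * ‖y‖) ≤ F y x := by
    intro y x
    have h1 : ‖T x‖ ≤ ‖y - T x‖ + ‖y‖ := by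
      have e : T x = y - (y - T x) := by abel
      calc ‖T x‖ = ‖y - (y - T x)‖ := by rw [← e]
        _ ≤ ‖y‖ + ‖y - T x‖ := norm_sub_le _ _
        _ = ‖y - T x‖ + ‖y‖ := by ring
    have h2 := h x
    have h3 : c * ‖T x‖ ≤ c * (‖y - T x‖ + ‖y‖) := mul_le_mul_of_nonneg_left h1 hc
    simp only [hF]
    nlinarith
  set q : Y → ℝ := fun y => sInf (Set.range (F y)) with hq
  have hbdd : ∀ y, BddBelow (Set.range (F y)) := fun y => ⟨-(c * ‖y‖), by
    rintro r ⟨x, rfl⟩; exact hlb y x⟩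
  have hne : ∀ y, (Set.range (F y)).Nonempty := fun y => ⟨F y 0, ⟨0, rfl⟩⟩
  have hqle : ∀ y x, q y ≤ F y x := fun y x => csInf_le (hbdd y) ⟨x, rfl⟩
  have hqlb : ∀ y, -(c * ‖y‖) ≤ q y := fun y => le_csInf (hne y) (by rintro r ⟨x, rfl⟩; exact hlb y x)
  have hqnorm : ∀ y, q y ≤ c * ‖y‖ := by
    intro y
    have := hqle y 0
    simpa [hF] using this
  have N_hom : ∀ a : ℝ, 0 < a → ∀ y, q (a • y) = a * q y := by
    intro a ha y
    have hset : Set.range (F (a • y)) = a • Set.range (F y) := by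
      ext r
      rw [Set.mem_smul_set]
      constructor
      · rintro ⟨x, rfl⟩
        refine ⟨F y (a⁻¹ • x), ⟨a⁻¹ • x, rfl⟩, ?_⟩
        have e1 : a • y - T x = a • (y - T (a⁻¹ • x)) := by
          rw [map_smul, smul_sub, smul_smul, mul_inv_cancel₀ ha.ne', one_smul]
        simp only [hF, smul_eq_mul]
        rw [e1]
        simp only [map_smul, norm_smul, Real.norm_eq_abs, abs_of_pos ha,
          abs_of_pos (inv_pos.2 ha), smul_eq_mul]
        field_simp
      · rintro ⟨r, ⟨x, rfl⟩, rfl⟩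
        refine ⟨a • x, ?_⟩
        have e1 : a • y - T (a • x) = a • (y - T x) := by
          rw [map_smul, smul_sub]
        simp only [hF, smul_eq_mul]
        rw [e1]
        simp only [map_smul, norm_smul, Real.norm_eq_abs, abs_of_pos ha, smul_eq_mul]
        ring
    show sInf (Set.range (F (a • y))) = a * sInf (Set.range (F y))
    rw [hset, Real.sInf_smul_of_nonneg ha.le, smul_eq_mul]
  have N_add : ∀ y₁ y₂, q (y₁ + y₂) ≤ q y₁ + q y₂ := by
    intro y₁ y₂
    have key : ∀ x₁ x₂ : X, q (y₁ + y₂) ≤ F y₁ x₁ + F y₂ x₂ := by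
      intro x₁ x₂
      refine (hqle (y₁ + y₂) (x₁ + x₂)).trans ?_
      simp only [hF, map_add]
      have h1 : ‖y₁ + y₂ - (T x₁ + T x₂)‖ ≤ ‖y₁ - T x₁‖ + ‖y₂ - T x₂‖ := by
        calc ‖y₁ + y₂ - (T x₁ + T x₂)‖ = ‖(y₁ - T x₁) + (y₂ - T x₂)‖ := by congr 1; abel
          _ ≤ ‖y₁ - T x₁‖ + ‖y₂ - T x₂‖ := norm_add_le _ _
      have h2 : ‖x₁ + x₂‖ ≤ ‖x₁‖ + ‖x₂‖ := norm_add_le _ _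
      nlinarith
    have h1 : q (y₁ + y₂) - q y₁ ≤ q y₂ := by
      refine le_csInf (hne y₂) ?_
      rintro r ⟨x₂, rfl⟩
      have h2 : q (y₁ + y₂) - F y₂ x₂ ≤ q y₁ := by
        refine le_csInf (hne y₁) ?_
        rintro r ⟨x₁, rfl⟩
        linarith [key x₁ x₂]
      linarith
    linarith
  -- extend 0 on the trivial subspace
  obtain ⟨ψ, -, hψ⟩ := exists_extension_of_le_sublinear ⟨⊥, 0⟩ q N_hom N_add
    (by rintro ⟨x, hx⟩
        rcases (Submodule.mem_bot ℝ).1 hx with rfl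
        have h0 : (0:ℝ) ≤ q 0 := by simpa using hqlb 0
        simpa using h0)
  have hψbound : ∀ y, ‖ψ y‖ ≤ c * ‖y‖ := by
    intro y
    rw [Real.norm_eq_abs, abs_le]
    constructor
    · have := (hψ (-y)).trans (hqnorm (-y))
      simp only [map_neg, norm_neg] at this
      linarith
    · exact (hψ y).trans (hqnorm y)
  set ψc : StrongDual ℝ Y := LinearMap.mkContinuous ψ c hψbound with hψc
  refine ⟨-ψc, ?_⟩
  refine ContinuousLinearMap.opNorm_le_bound _ hβ ?_
  intro x
  have hkey : ∀ x : X, f₀ x + ψ (T x) ≤ β * ‖x‖ := by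
    intro x
    have := (hψ (T x)).trans (hqle (T x) x)
    simp only [hF, sub_self, norm_zero, mul_zero, zero_add] at this
    linarith
  have h1 : (f₀ - (-ψc).comp T) x = f₀ x + ψ (T x) := by
    simp [hψc, LinearMap.mkContinuous, sub_neg_eq_add]
  rw [h1, Real.norm_eq_abs, abs_le]
  constructor
  · have := hkey (-x)
    simp only [map_neg, norm_neg] at this
    linarith
  · exact hkey x

end Aux
section Aux2

variable {X : Type*} [NormedAddCommGroup X] [NormedSpace ℝ X] [CompleteSpace X]

/-- A norm-convergent countable convex combination of elements of a closed convex
set (of norm-bounded elements) stays in the set. -/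
lemma tsum_mem_closed_convex {C : Set X} (hconv : Convex ℝ C) (hcl : IsClosed C)
    {μ : ℕ → ℝ} (hμ0 : ∀ j, 0 ≤ μ j) (hμ1 : HasSum μ 1)
    {v : ℕ → X} (hv : ∀ j, v j ∈ C) (hvb : ∀ j, ‖v j‖ ≤ 1) :
    (∑' j, μ j • v j) ∈ C := by
  have hsum : Summable (fun j => μ j • v j) := by
    refine Summable.of_norm_bounded hμ1.summable fun j => ?_
    rw [norm_smul, Real.norm_eq_abs, abs_of_nonneg (hμ0 j)]
    exact mul_le_of_le_one_right (hμ0 j) (hvb j)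
  set S : ℕ → X := fun m =>
    (∑ j ∈ Finset.range m, μ j • v j) + (1 - ∑ j ∈ Finset.range m, μ j) • v 0 with hS
  have hmem : ∀ m, S m ∈ C := by
    intro m
    have hrem : 0 ≤ 1 - ∑ j ∈ Finset.range m, μ j :=
      sub_nonneg.2 (sum_le_hasSum _ (fun i _ => hμ0 i) hμ1)
    have := hconv.sum_mem (t := Finset.range (m + 1))
      (w := fun j => if j < m then μ j else 1 - ∑ i ∈ Finset.range m, μ i)
      (z := fun j => if j < m then v j else v 0)
      (fun i _ => by by_cases h : i < m <;> simp [h, hμ0 i, hrem])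
      (by
        rw [Finset.sum_range_succ, if_neg (lt_irrefl m)]
        have : ∑ j ∈ Finset.range m, (if j < m then μ j else 1 - ∑ i ∈ Finset.range m, μ i)
            = ∑ j ∈ Finset.range m, μ j :=
          Finset.sum_congr rfl fun j hj => if_pos (Finset.mem_range.1 hj)
        rw [this]; ring)
      (fun i _ => by by_cases h : i < m <;> simp [h, hv])
    have heq : (∑ i ∈ Finset.range (m + 1),
        (if i < m then μ i else 1 - ∑ i ∈ Finset.range m, μ i) •
          (if i < m then v i else v 0)) = S m := by
      rw [Finset.sum_range_succ, if_neg (lt_irrefl m), if_neg (lt_irrefl m), hS]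
      congr 1
      exact Finset.sum_congr rfl fun j hj => by
        rw [if_pos (Finset.mem_range.1 hj), if_pos (Finset.mem_range.1 hj)]
    rwa [heq] at this
  have h1 : Tendsto (fun m => ∑ j ∈ Finset.range m, μ j • v j) atTop
      (𝓝 (∑' j, μ j • v j)) := hsum.hasSum.tendsto_sum_nat
  have h2 : Tendsto (fun m => (1 - ∑ j ∈ Finset.range m, μ j)) atTop (𝓝 0) := by
    have := hμ1.tendsto_sum_nat
    have h3 := (tendsto_const_nhds (x := (1:ℝ)) (f := atTop)).sub this
    simpa using h3
  have h4 : Tendsto S atTop (𝓝 (∑' j, μ j • v j)) := by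
    have h5 : Tendsto (fun m => (1 - ∑ j ∈ Finset.range m, μ j) • v 0) atTop (𝓝 0) := by
      have := h2.smul_const (v 0)
      simpa using this
    have := h1.add h5
    simpa using this
  exact hcl.mem_of_tendsto h4 (Eventually.of_forall hmem)

open Classical in
/-- One step in the Simons construction: a near-minimizer of
`w ↦ ‖h + 2⁻ⁿ • w‖` over `V n`. -/
noncomputable def simonsStep (V : ℕ → Set X) (ε : ℝ) (n : ℕ) (h : X) : X :=
  if hh : ∃ w, w ∈ V n ∧ ‖h + ((2:ℝ)⁻¹ ^ n) • w‖ ≤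
      sInf ((fun w => ‖h + ((2:ℝ)⁻¹ ^ n) • w‖) '' V n) + ε * (4:ℝ)⁻¹ ^ (n + 1)
  then hh.choose else 0

/-- Partial sums in the Simons construction. -/
noncomputable def simonsH (V : ℕ → Set X) (ε : ℝ) : ℕ → X
  | 0 => 0
  | n + 1 => simonsH V ε n + ((2:ℝ)⁻¹ ^ (n + 1)) • simonsStep V ε n (simonsH V ε n)

lemma simonsStep_spec (V : ℕ → Set X) {ε : ℝ} (hε : 0 < ε) (n : ℕ)
    (hne : (V n).Nonempty) (h : X) :
    simonsStep V ε n h ∈ V n ∧ ∀ w ∈ V n,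
      ‖h + ((2:ℝ)⁻¹ ^ n) • simonsStep V ε n h‖ ≤
        ‖h + ((2:ℝ)⁻¹ ^ n) • w‖ + ε * (4:ℝ)⁻¹ ^ (n + 1) := by
  set s := (fun w => ‖h + ((2:ℝ)⁻¹ ^ n) • w‖) '' V n with hs
  have hsne : s.Nonempty := hne.image _
  have hbdd : BddBelow s := ⟨0, by rintro r ⟨w, -, rfl⟩; exact norm_nonneg _⟩
  have hex : ∃ w, w ∈ V n ∧ ‖h + ((2:ℝ)⁻¹ ^ n) • w‖ ≤ sInf s + ε * (4:ℝ)⁻¹ ^ (n + 1) := by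
    obtain ⟨a, ⟨w, hw, rfl⟩, ha⟩ := Real.lt_sInf_add_pos hsne
      (ε := ε * (4:ℝ)⁻¹ ^ (n + 1)) (by positivity)
    exact ⟨w, hw, ha.le⟩
  classical
  rw [simonsStep, dif_pos hex]
  obtain ⟨hw1, hw2⟩ := hex.choose_spec
  refine ⟨hw1, fun w hw => hw2.trans ?_⟩
  have : sInf s ≤ ‖h + ((2:ℝ)⁻¹ ^ n) • w‖ := csInf_le hbdd ⟨w, hw, rfl⟩
  linarith

end Aux2

/-- `B ⊆ S_{X*}` is a boundary of `X`: every `x` attains its norm at some `f ∈ B`. -/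
def IsBoundary {X : Type*} [NormedAddCommGroup X] [NormedSpace ℝ X]
    (B : Set (StrongDual ℝ X)) : Prop :=
  (∀ f ∈ B, ‖f‖ = 1) ∧ ∀ x : X, ∃ f ∈ B, f x = ‖x‖

set_option maxHeartbeats 1000000 in
theorem adjoint_range_dense_of_contains_boundary
    {X Y : Type*} [NormedAddCommGroup X] [NormedSpace ℝ X] [CompleteSpace X]
    [NormedAddCommGroup Y] [NormedSpace ℝ Y] [CompleteSpace Y]
    (T : X →L[ℝ] Y) (B : Set (StrongDual ℝ X)) (hB : IsBoundary B)
    (hBT : B ⊆ Set.range (fun g : StrongDual ℝ Y => g.comp T)) :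
    Dense (Set.range (fun g : StrongDual ℝ Y => g.comp T)) := by
  by_contra hnd
  obtain ⟨f₀, hf₀⟩ : ∃ f₀ : StrongDual ℝ X,
      f₀ ∉ closure (Set.range (fun g : StrongDual ℝ Y => g.comp T)) := by
    by_contra hall
    push_neg at hall
    exact hnd fun f => hall f
  rw [Metric.mem_closure_iff] at hf₀
  push_neg at hf₀
  obtain ⟨ε₀, hε₀, hsep⟩ := hf₀
  set β := ε₀ / 2 with hβdef
  have hβpos : 0 < β := half_pos hε₀
  -- Point selection via the Hahn-Banach factorization lemma
  have hsel : ∀ δ : ℝ, 0 < δ → ∃ u : X, ‖u‖ ≤ 1 ∧ β ≤ f₀ u ∧ ‖T u‖ ≤ δ := by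
    intro δ hδ
    by_contra hcon
    push_neg at hcon
    have hmaj : ∀ x, f₀ x ≤ β * ‖x‖ + (‖f₀‖ / δ) * ‖T x‖ := by
      intro x
      rcases eq_or_ne x 0 with rfl | hx
      · simp
      have hxpos : 0 < ‖x‖ := norm_pos_iff.2 hx
      by_cases hT : ‖T x‖ ≤ δ * ‖x‖
      · set u := ‖x‖⁻¹ • x with hu
        have hu1 : ‖u‖ ≤ 1 := by
          rw [hu, norm_smul, Real.norm_eq_abs, abs_of_pos (inv_pos.2 hxpos),
            inv_mul_cancel₀ hxpos.ne']
        have hTu : ‖T u‖ ≤ δ := by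
          rw [hu, map_smul, norm_smul, Real.norm_eq_abs, abs_of_pos (inv_pos.2 hxpos)]
          rw [inv_mul_le_iff₀ hxpos]
          linarith
        have hfu : f₀ u < β := by
          by_contra hge
          push_neg at hge
          exact absurd hTu (not_le.2 (hcon u hu1 hge))
        have hfx : f₀ x = ‖x‖ * f₀ u := by
          rw [hu, map_smul, smul_eq_mul]
          field_simp
        have hd : 0 ≤ (‖f₀‖ / δ) * ‖T x‖ :=
          mul_nonneg (div_nonneg (norm_nonneg _) hδ.le) (norm_nonneg _)
        nlinarith
      · push_neg at hT
        have h1 : f₀ x ≤ ‖f₀‖ * ‖x‖ := by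
          have := f₀.le_opNorm x
          rw [Real.norm_eq_abs] at this
          exact (le_abs_self _).trans this
        have h2 : ‖f₀‖ * ‖x‖ ≤ (‖f₀‖ / δ) * ‖T x‖ := by
          rw [div_mul_eq_mul_div, le_div_iff₀ hδ]
          nlinarith [norm_nonneg f₀]
        nlinarith [mul_nonneg hβpos.le (norm_nonneg x)]
    obtain ⟨g, hg⟩ := exists_factor T f₀ β (‖f₀‖ / δ) hβpos.le
      (div_nonneg (norm_nonneg _) hδ.le) hmaj
    have h3 := hsep (g.comp T) ⟨g, rfl⟩
    rw [dist_eq_norm] at h3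
    linarith
  have hf₀pos : 0 < ‖f₀‖ := by
    obtain ⟨u, hu1, hu2, -⟩ := hsel 1 one_pos
    have h1 : f₀ u ≤ ‖f₀‖ * ‖u‖ := by
      have := f₀.le_opNorm u
      rw [Real.norm_eq_abs] at this
      exact (le_abs_self _).trans this
    nlinarith [norm_nonneg f₀, norm_nonneg u]
  choose xx hx1 hx2 hx3 using fun n : ℕ => hsel (1 / ((n : ℝ) + 1)) (by positivity)
  set ρ := β / ‖f₀‖ with hρdef
  have hρpos : 0 < ρ := div_pos hβpos hf₀pos
  set ε := ρ / 2 with hεdef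
  have hεpos : 0 < ε := half_pos hρpos
  -- The sets V n
  set V : ℕ → Set X := fun n => closure (convexHull ℝ (xx '' {k | n ≤ k})) with hV
  have hVconv : ∀ n, Convex ℝ (V n) := fun n => (convex_convexHull ℝ _).closure
  have hVcl : ∀ n, IsClosed (V n) := fun n => isClosed_closure
  have hVne : ∀ n, (V n).Nonempty := fun n =>
    ⟨xx n, subset_closure (subset_convexHull ℝ _ (Set.mem_image_of_mem xx (le_refl n)))⟩
  have hVsub : ∀ n (s : Set X), Convex ℝ s → IsClosed s →
      (∀ k, n ≤ k → xx k ∈ s) → V n ⊆ s := by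
    intro n s hs hscl hgen
    exact closure_minimal (convexHull_min (by rintro _ ⟨k, hk, rfl⟩; exact hgen k hk) hs) hscl
  have hVmono : ∀ m n, n ≤ m → V m ⊆ V n := fun m n h =>
    closure_mono (convexHull_mono (Set.image_mono fun k hk => le_trans h hk))
  have hVnorm : ∀ n, ∀ w ∈ V n, ‖w‖ ≤ 1 := by
    intro n w hw
    have := hVsub n (Metric.closedBall 0 1) (convex_closedBall _ _)
      Metric.isClosed_closedBall (fun k _ => mem_closedBall_zero_iff.2 (hx1 k)) hw
    exact mem_closedBall_zero_iff.1 this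
  have hVf₀ : ∀ n, ∀ w ∈ V n, β ≤ f₀ w := by
    intro n w hw
    exact hVsub n {w | β ≤ f₀ w}
      (convex_halfSpace_ge (IsLinearMap.mk f₀.map_add f₀.map_smul) _)
      (isClosed_le continuous_const f₀.continuous) (fun k _ => hx2 k) hw
  -- the recursive construction
  set z : ℕ → X := fun n => simonsStep V ε n (simonsH V ε n) with hz
  have hzspec : ∀ n, z n ∈ V n ∧ ∀ w ∈ V n,
      ‖simonsH V ε n + ((2:ℝ)⁻¹ ^ n) • z n‖ ≤
        ‖simonsH V ε n + ((2:ℝ)⁻¹ ^ n) • w‖ + ε * (4:ℝ)⁻¹ ^ (n + 1) := by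
    intro n
    simp only [hz]
    exact simonsStep_spec V hεpos n (hVne n) _
  have hzmem : ∀ n, z n ∈ V n := fun n => (hzspec n).1
  have hznorm : ∀ j, ‖z j‖ ≤ 1 := fun j => hVnorm j _ (hzmem j)
  -- geometric series facts
  have hμ1 : HasSum (fun j : ℕ => (2:ℝ)⁻¹ ^ (j + 1)) 1 := by
    have hgeo := hasSum_geometric_of_lt_one (r := (2:ℝ)⁻¹) (by norm_num) (by norm_num)
    have := hgeo.mul_left (2:ℝ)⁻¹
    norm_num at this
    have heq : (fun j : ℕ => (2:ℝ)⁻¹ ^ (j + 1)) = fun j : ℕ => 2⁻¹ * 2⁻¹ ^ j := by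
      funext j; rw [pow_succ]; ring
    rw [heq]
    simpa [one_div] using this
  set u : ℕ → X := fun j => ((2:ℝ)⁻¹ ^ (j + 1)) • z j with hu
  have husum : Summable u := by
    refine Summable.of_norm_bounded hμ1.summable fun j => ?_
    simp only [hu]
    rw [norm_smul, Real.norm_eq_abs, abs_of_nonneg (by positivity)]
    exact mul_le_of_le_one_right (by positivity) (hznorm j)
  set g : X := ∑' j, u j with hg
  have hpart : ∀ m, ∑ j ∈ Finset.range m, u j = simonsH V ε m := by
    intro m
    induction m with
    | zero => simp [simonsH]
    | succ n ih =>
      rw [Finset.sum_range_succ, ih]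
      simp only [hu, hz]
      rfl
  have hsplit : ∀ n, simonsH V ε n + ∑' j, u (j + n) = g := by
    intro n
    rw [hg, ← hpart n]
    exact husum.sum_add_tsum_nat_add n
  set ζ : ℕ → X := fun n => ∑' j, ((2:ℝ)⁻¹ ^ (j + 1)) • z (j + (n + 1)) with hζ
  have hζsum : ∀ n, Summable (fun j => ((2:ℝ)⁻¹ ^ (j + 1)) • z (j + (n + 1))) := by
    intro n
    refine Summable.of_norm_bounded hμ1.summable fun j => ?_
    rw [norm_smul, Real.norm_eq_abs, abs_of_nonneg (by positivity)]
    exact mul_le_of_le_one_right (by positivity) (hznorm _)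
  have hζmem : ∀ n, ζ n ∈ V (n + 1) := by
    intro n
    simp only [hζ]
    exact tsum_mem_closed_convex (hVconv _) (hVcl _) (fun j => by positivity) hμ1
      (fun j => hVmono _ _ (by omega) (hzmem _)) (fun j => hznorm _)
  have hrtail : ∀ n, ∑' j, u (j + (n + 1)) = ((2:ℝ)⁻¹ ^ (n + 1)) • ζ n := by
    intro n
    simp only [hζ]
    rw [← Summable.tsum_const_smul _ (hζsum n)]
    refine tsum_congr fun j => ?_
    simp only [hu]
    rw [smul_smul, ← pow_add]
    congr 2
    omega
  -- the boundary functional at g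
  obtain ⟨b, hbB, hbg⟩ := hB.2 g
  obtain ⟨gb, hgb⟩ := hBT hbB
  have hgb' : ∀ v : X, b v = gb (T v) := by
    intro v
    rw [← hgb]
    rfl
  have hbnorm : ‖b‖ = 1 := hB.1 b hbB
  have hble : ∀ v : X, b v ≤ ‖v‖ := by
    intro v
    have := b.le_opNorm v
    rw [hbnorm, one_mul, Real.norm_eq_abs] at this
    exact (le_abs_self _).trans this
  set C := ‖gb‖ with hC
  have hbV : ∀ m, ∀ v ∈ V m, b v ≤ C / ((m : ℝ) + 1) := by
    intro m
    refine hVsub m {w | b w ≤ C / ((m : ℝ) + 1)}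
      (convex_halfSpace_le (IsLinearMap.mk b.map_add b.map_smul) _)
      (isClosed_le b.continuous continuous_const) ?_
    intro k hk
    rw [Set.mem_setOf_eq, hgb' (xx k)]
    have h1 : gb (T (xx k)) ≤ ‖gb‖ * ‖T (xx k)‖ := by
      have := gb.le_opNorm (T (xx k))
      rw [Real.norm_eq_abs] at this
      exact (le_abs_self _).trans this
    have h2 : ‖T (xx k)‖ ≤ 1 / ((k : ℝ) + 1) := hx3 k
    have h3 : (1 : ℝ) / ((k : ℝ) + 1) ≤ 1 / ((m : ℝ) + 1) := by
      apply one_div_le_one_div_of_le (by positivity)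
      have : (m : ℝ) ≤ (k : ℝ) := Nat.cast_le.2 hk
      linarith
    have h4 : (0:ℝ) ≤ C := norm_nonneg _
    calc gb (T (xx k)) ≤ C * ‖T (xx k)‖ := h1
      _ ≤ C * (1 / ((m : ℝ) + 1)) := by
          refine mul_le_mul_of_nonneg_left (h2.trans h3) h4
      _ = C / ((m : ℝ) + 1) := by ring
  set bq : ℕ → ℝ := fun n => b (z n) with hbq
  have hbq_bound : ∀ j, |bq j| ≤ 1 := by
    intro j
    have := b.le_opNorm (z j)
    rw [hbnorm, one_mul, Real.norm_eq_abs] at this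
    exact this.trans (hznorm j)
  have hbζsum : ∀ n, Summable (fun j => ((2:ℝ)⁻¹ ^ (j + 1)) * bq (j + (n + 1))) := by
    intro n
    refine Summable.of_norm_bounded hμ1.summable fun j => ?_
    rw [Real.norm_eq_abs, abs_mul, abs_of_nonneg (by positivity : (0:ℝ) ≤ (2:ℝ)⁻¹ ^ (j+1))]
    exact mul_le_of_le_one_right (by positivity) (hbq_bound _)
  have hbζ : ∀ n, b (ζ n) = ∑' j, ((2:ℝ)⁻¹ ^ (j + 1)) * bq (j + (n + 1)) := by
    intro n
    simp only [hζ]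
    rw [b.map_tsum (hζsum n)]
    exact tsum_congr fun j => by rw [map_smul, smul_eq_mul]
  -- the combination equal to g
  have hg_eq : ∀ n, simonsH V ε n
      + ((2:ℝ)⁻¹ ^ n) • (((2:ℝ)⁻¹) • z n + ((2:ℝ)⁻¹) • ζ n) = g := by
    intro n
    have h1 : ((2:ℝ)⁻¹ ^ n) • (((2:ℝ)⁻¹) • z n + ((2:ℝ)⁻¹) • ζ n)
        = ((2:ℝ)⁻¹ ^ (n + 1)) • z n + ((2:ℝ)⁻¹ ^ (n + 1)) • ζ n := by
      rw [smul_add, smul_smul, smul_smul, pow_succ]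
    rw [h1, ← hrtail n, ← add_assoc]
    have h2 : simonsH V ε n + ((2:ℝ)⁻¹ ^ (n + 1)) • z n = simonsH V ε (n + 1) := by
      simp only [hz]
      rfl
    rw [h2]
    exact hsplit (n + 1)
  have hwmem : ∀ n, ((2:ℝ)⁻¹) • z n + ((2:ℝ)⁻¹) • ζ n ∈ V n := fun n =>
    (hVconv n) (hzmem n) (hVmono (n + 1) n (by omega) (hζmem n))
      (by norm_num) (by norm_num) (by norm_num)
  clear_value V z u g ζ bq
  -- the key inequality
  have hkey : ∀ n, bq n ≤ b (ζ n) + ε * (2:ℝ)⁻¹ ^ (n + 1) := by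
    intro n
    have h2 := (hzspec n).2 _ (hwmem n)
    rw [hg_eq n] at h2
    have h1 : b (simonsH V ε n) + ((2:ℝ)⁻¹ ^ n) * bq n ≤ ‖g‖ + ε * (4:ℝ)⁻¹ ^ (n + 1) := by
      calc b (simonsH V ε n) + ((2:ℝ)⁻¹ ^ n) * bq n
          = b (simonsH V ε n + ((2:ℝ)⁻¹ ^ n) • z n) := by
            rw [map_add, map_smul, smul_eq_mul]
            simp only [hbq]
        _ ≤ ‖simonsH V ε n + ((2:ℝ)⁻¹ ^ n) • z n‖ := hble _
        _ ≤ ‖g‖ + ε * (4:ℝ)⁻¹ ^ (n + 1) := h2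
    have h4 : b g = b (simonsH V ε n) + ((2:ℝ)⁻¹ ^ (n + 1)) * bq n
        + ((2:ℝ)⁻¹ ^ (n + 1)) * b (ζ n) := by
      conv_lhs => rw [← hg_eq n]
      rw [map_add, map_smul, map_add, map_smul, map_smul]
      simp only [smul_eq_mul, hbq]
      ring
    have h5 : ‖g‖ = b g := hbg.symm
    have hp : (0:ℝ) < (2:ℝ)⁻¹ ^ (n + 1) := by positivity
    have hpow : (2:ℝ)⁻¹ ^ n = 2 * (2:ℝ)⁻¹ ^ (n + 1) := by rw [pow_succ]; ring
    have hpow4 : (4:ℝ)⁻¹ ^ (n + 1) = (2:ℝ)⁻¹ ^ (n + 1) * (2:ℝ)⁻¹ ^ (n + 1) := by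
      rw [← mul_pow]; norm_num
    rw [h5, h4, hpow, hpow4] at h1
    have h6 : (2:ℝ)⁻¹ ^ (n + 1) * bq n ≤ (2:ℝ)⁻¹ ^ (n + 1) * (b (ζ n) + ε * (2:ℝ)⁻¹ ^ (n + 1)) := by
      nlinarith [h1]
    exact le_of_mul_le_mul_left h6 hp
  -- downward induction
  set η := ρ / 4 with hηdef
  have hηpos : 0 < η := by rw [hηdef]; positivity
  obtain ⟨n₀, hn₀⟩ : ∃ n₀ : ℕ, C / ((n₀ : ℝ) + 1) ≤ η := by
    obtain ⟨n₀, hn₀⟩ := exists_nat_gt (C / η)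
    refine ⟨n₀, ?_⟩
    rw [div_le_iff₀ (by positivity)]
    rw [div_lt_iff₀ hηpos] at hn₀
    nlinarith
  have hsmall : ∀ n, n₀ ≤ n → bq n ≤ η := by
    intro n hn
    have h1 := hbV n (z n) (hzmem n)
    have h2 : C / ((n : ℝ) + 1) ≤ C / ((n₀ : ℝ) + 1) := by
      have hc : ((n₀ : ℝ) + 1) ≤ ((n : ℝ) + 1) := by
        have : (n₀ : ℝ) ≤ (n : ℝ) := Nat.cast_le.2 hn
        linarith
      have h3 := one_div_le_one_div_of_le (by positivity : (0:ℝ) < (n₀ : ℝ) + 1) hc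
      calc C / ((n : ℝ) + 1) = C * (1 / ((n : ℝ) + 1)) := by ring
        _ ≤ C * (1 / ((n₀ : ℝ) + 1)) := mul_le_mul_of_nonneg_left h3 (norm_nonneg _)
        _ = C / ((n₀ : ℝ) + 1) := by ring
    simp only [hbq]
    linarith
  have hind : ∀ m n, n₀ ≤ n + m → bq n ≤ η + (3/2) * ε * (2:ℝ)⁻¹ ^ (n + 1) := by
    intro m
    induction m with
    | zero =>
      intro n hn
      have h1 : bq n ≤ η := hsmall n (by omega)
      have h2 : (0:ℝ) ≤ (3/2) * ε * (2:ℝ)⁻¹ ^ (n + 1) := by positivity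
      linarith
    | succ m ih =>
      intro n hn
      by_cases hcase : n₀ ≤ n
      · have h1 : bq n ≤ η := hsmall n hcase
        have h2 : (0:ℝ) ≤ (3/2) * ε * (2:ℝ)⁻¹ ^ (n + 1) := by positivity
        linarith
      · have hterm : ∀ j : ℕ, bq (j + (n + 1)) ≤ η + (3/2) * ε * (2:ℝ)⁻¹ ^ ((j + (n + 1)) + 1) :=
          fun j => ih (j + (n + 1)) (by omega)
        -- bound b (ζ n)
        have hRsum1 : Summable (fun j : ℕ => η * ((2:ℝ)⁻¹ ^ (j + 1))) :=
          hμ1.summable.mul_left η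
        have hRsum2 : Summable (fun j : ℕ => ((3/2) * ε * (2:ℝ)⁻¹ ^ (n + 3)) * ((4:ℝ)⁻¹ ^ j)) :=
          (summable_geometric_of_lt_one (by norm_num) (by norm_num)).mul_left _
        have hterm_eq : ∀ j : ℕ, ((2:ℝ)⁻¹ ^ (j + 1)) * (η + (3/2) * ε * (2:ℝ)⁻¹ ^ ((j + (n + 1)) + 1))
            = η * ((2:ℝ)⁻¹ ^ (j + 1)) + ((3/2) * ε * (2:ℝ)⁻¹ ^ (n + 3)) * ((4:ℝ)⁻¹ ^ j) := by
          intro j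
          have a1 : (2:ℝ)⁻¹ ^ ((j + (n + 1)) + 1) = 2⁻¹ ^ j * 2⁻¹ ^ (n + 2) := by
            rw [show (j + (n + 1)) + 1 = j + (n + 2) by omega, pow_add]
          have a2 : (2:ℝ)⁻¹ ^ (j + 1) = 2⁻¹ ^ j * 2⁻¹ ^ 1 := by rw [pow_add]
          have a3 : (2:ℝ)⁻¹ ^ (n + 3) = 2⁻¹ ^ (n + 2) * 2⁻¹ ^ 1 := by
            rw [show n + 3 = (n + 2) + 1 by omega, pow_add]
          have a4 : (4:ℝ)⁻¹ ^ j = 2⁻¹ ^ j * 2⁻¹ ^ j := by rw [← mul_pow]; norm_num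
          rw [a1, a2, a3, a4]
          ring
        have h2 : b (ζ n) ≤ η + ε * (2:ℝ)⁻¹ ^ (n + 2) := by
          rw [hbζ n]
          have hle : (∑' j, ((2:ℝ)⁻¹ ^ (j + 1)) * bq (j + (n + 1))) ≤
              ∑' j, (η * ((2:ℝ)⁻¹ ^ (j + 1)) + ((3/2) * ε * (2:ℝ)⁻¹ ^ (n + 3)) * ((4:ℝ)⁻¹ ^ j)) := by
            refine Summable.tsum_le_tsum (fun j => ?_) (hbζsum n) (hRsum1.add hRsum2)
            rw [← hterm_eq j]
            exact mul_le_mul_of_nonneg_left (hterm j) (by positivity)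
          refine hle.trans ?_
          rw [Summable.tsum_add hRsum1 hRsum2, tsum_mul_left, tsum_mul_left, hμ1.tsum_eq,
            tsum_geometric_of_lt_one (by norm_num) (by norm_num)]
          have e4 : (2:ℝ)⁻¹ ^ (n + 3) = (2:ℝ)⁻¹ ^ (n + 2) * 2⁻¹ := by
            rw [show n + 3 = (n + 2) + 1 by omega, pow_succ]
          rw [e4]
          norm_num
          have e6 : (3:ℝ) / 2 * ε * ((1/2) ^ (n + 2) * (1/2)) * (4/3) = ε * (1/2) ^ (n + 2) := by
            ring
          linarith
        have h1 := hkey n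
        have e5 : (2:ℝ)⁻¹ ^ (n + 2) = (2:ℝ)⁻¹ ^ (n + 1) * 2⁻¹ := by
          rw [show n + 2 = (n + 1) + 1 by omega, pow_succ]
        rw [e5] at h2
        linarith
  -- final contradiction
  have hbgsum : b g = ∑' j, ((2:ℝ)⁻¹ ^ (j + 1)) * bq j := by
    rw [hg, b.map_tsum husum]
    refine tsum_congr fun j => ?_
    simp only [hu]
    rw [map_smul, smul_eq_mul]
    simp only [hbq]
  have hbqsum : Summable (fun j : ℕ => ((2:ℝ)⁻¹ ^ (j + 1)) * bq j) := by
    refine Summable.of_norm_bounded hμ1.summable fun j => ?_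
    rw [Real.norm_eq_abs, abs_mul, abs_of_nonneg (by positivity : (0:ℝ) ≤ (2:ℝ)⁻¹ ^ (j + 1))]
    exact mul_le_of_le_one_right (by positivity) (hbq_bound _)
  have hfin : b g ≤ η + ε / 2 := by
    rw [hbgsum]
    have hRsum1 : Summable (fun j : ℕ => η * ((2:ℝ)⁻¹ ^ (j + 1))) :=
      hμ1.summable.mul_left η
    have hRsum2 : Summable (fun j : ℕ => ((3/2) * ε * (4:ℝ)⁻¹ * ((4:ℝ)⁻¹ ^ j))) :=
      (summable_geometric_of_lt_one (by norm_num) (by norm_num)).mul_left _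
    have hterm_eq : ∀ j : ℕ, ((2:ℝ)⁻¹ ^ (j + 1)) * (η + (3/2) * ε * (2:ℝ)⁻¹ ^ (j + 1))
        = η * ((2:ℝ)⁻¹ ^ (j + 1)) + ((3/2) * ε * (4:ℝ)⁻¹) * ((4:ℝ)⁻¹ ^ j) := by
      intro j
      have a2 : (2:ℝ)⁻¹ ^ (j + 1) = 2⁻¹ ^ j * 2⁻¹ ^ 1 := by rw [pow_add]
      have a4 : (4:ℝ)⁻¹ ^ j = 2⁻¹ ^ j * 2⁻¹ ^ j := by rw [← mul_pow]; norm_num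
      have a5 : ((4:ℝ)⁻¹) = 2⁻¹ ^ 1 * 2⁻¹ ^ 1 := by norm_num
      rw [a2, a4, a5]
      ring
    have hle : (∑' j, ((2:ℝ)⁻¹ ^ (j + 1)) * bq j) ≤
        ∑' j, (η * ((2:ℝ)⁻¹ ^ (j + 1)) + ((3/2) * ε * (4:ℝ)⁻¹) * ((4:ℝ)⁻¹ ^ j)) := by
      refine Summable.tsum_le_tsum (fun j => ?_) hbqsum (hRsum1.add hRsum2)
      rw [← hterm_eq j]
      exact mul_le_mul_of_nonneg_left (hind n₀ j (by omega)) (by positivity)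
    refine hle.trans ?_
    rw [Summable.tsum_add hRsum1 hRsum2, tsum_mul_left, tsum_mul_left, hμ1.tsum_eq,
      tsum_geometric_of_lt_one (by norm_num) (by norm_num)]
    norm_num
    have e6 : (3:ℝ) / 2 * ε * (1/4) * (4/3) = ε / 2 := by ring
    linarith
  have hgV : g ∈ V 0 := by
    have := tsum_mem_closed_convex (hVconv 0) (hVcl 0)
      (fun j => by positivity : ∀ j : ℕ, (0:ℝ) ≤ (2:ℝ)⁻¹ ^ (j + 1)) hμ1
      (fun j => hVmono j 0 (Nat.zero_le j) (hzmem j)) hznorm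
    rw [hg]
    simp only [hu]
    exact this
  have hf₀g : β ≤ f₀ g := hVf₀ 0 g hgV
  have hgnorm_lb : ρ ≤ ‖g‖ := by
    have h1 : f₀ g ≤ ‖f₀‖ * ‖g‖ := by
      have := f₀.le_opNorm g
      rw [Real.norm_eq_abs] at this
      exact (le_abs_self _).trans this
    rw [hρdef, div_le_iff₀ hf₀pos]
    nlinarith
  have hcontra : ρ ≤ ρ / 2 := by
    have h1 : ‖g‖ = b g := hbg.symm
    have h2 : ρ ≤ η + ε / 2 := by
      rw [h1] at hgnorm_lb
      linarith
    rw [hηdef, hεdef] at h2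
    linarith
  linarith
end

section
/- Let $K \subseteq X^*$ be weak*-compact and convex, and let $B \subseteq K$ be a boundary of $K$, i.e., for every $x \in X$ there is $f \in B$ with $f(x) = \max_{g \in K} g(x)$. If $B = \bigcup_{i=1}^\infty B_i$ with $B_i \subseteq B_{i+1}$, then $\bigcup_{i=1}^\infty \overline{\mathrm{co}}^{w^*}(B_i)$ is norm-dense in $K$ ((I)-property of boundaries). -/
open NormedSpace Filter Set Topology

/-- The weak*-closed convex hull of a set of functionals. -/
noncomputable def wstarClosedConvexHull {X : Type*} [NormedAddCommGroup X] [NormedSpace ℝ X]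
    (S : Set (StrongDual ℝ X)) : Set (StrongDual ℝ X) :=
  StrongDual.toWeakDual ⁻¹' closure (StrongDual.toWeakDual '' convexHull ℝ S)

section Aux

variable {X : Type*} [NormedAddCommGroup X] [NormedSpace ℝ X]

instance : LocallyConvexSpace ℝ (WeakDual ℝ X) :=
  WeakBilin.locallyConvexSpace (B := topDualPairing ℝ X)



lemma weakdual_functional_eq_eval (φ : WeakDual ℝ X →L[ℝ] ℝ) :
    ∃ x : X, ∀ g : WeakDual ℝ X, φ g = g x := by
  classical
  have hemb : IsInducing (fun (g : WeakDual ℝ X) (y : X) => g y) :=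
    (WeakBilin.isEmbedding (B := topDualPairing ℝ X)
      ContinuousLinearMap.coe_injective).toIsInducing
  have hS : φ ⁻¹' Metric.ball (0 : ℝ) 1 ∈ 𝓝 (0 : WeakDual ℝ X) := by
    have := φ.continuous.continuousAt (x := (0 : WeakDual ℝ X))
    apply this.preimage_mem_nhds
    rw [map_zero]
    exact Metric.ball_mem_nhds _ one_pos
  rw [hemb.nhds_eq_comap, Filter.mem_comap] at hS
  obtain ⟨U, hU, hUsub⟩ := hS
  have h0 : (fun (y : X) => (0 : WeakDual ℝ X) y) = (0 : X → ℝ) := by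
    funext y; rfl
  rw [h0, nhds_pi, Filter.mem_pi'] at hU
  obtain ⟨I, V, hV, hVsub⟩ := hU
  have hker : ∀ g : WeakDual ℝ X, (∀ i ∈ I, g i = 0) → φ g = 0 := by
    intro g hg
    by_contra hφg
    have hmem : ∀ s : ℝ, |φ (s • g)| < 1 := by
      intro s
      have hpi : (fun y => (s • g) y) ∈ Set.pi (↑I) V := by
        intro i hi
        have hz : (s • g) i = 0 := by
          rw [show (s • g) i = s * g i from rfl, hg i hi, mul_zero]
        show (s • g) i ∈ V i
        rw [hz]
        exact mem_of_mem_nhds (hV i)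
      have := hUsub (hVsub hpi)
      simpa [Real.norm_eq_abs, abs_mul] using this
    have h2 := hmem (2 / φ g)
    rw [map_smul, smul_eq_mul] at h2
    rw [div_mul_cancel₀ 2 hφg] at h2
    norm_num at h2
  set L : X → (WeakDual ℝ X →ₗ[ℝ] ℝ) := fun x =>
    { toFun := fun g => g x, map_add' := fun g h => rfl, map_smul' := fun c g => rfl } with hL
  have hle : (⨅ i : ↑I, LinearMap.ker (L i)) ≤ LinearMap.ker (φ : WeakDual ℝ X →ₗ[ℝ] ℝ) := by
    intro g hg
    simp only [Submodule.mem_iInf, LinearMap.mem_ker] at hg ⊢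
    exact hker g fun i hi => hg ⟨i, hi⟩
  have hspan := mem_span_of_iInf_ker_le_ker (𝕜 := ℝ) (L := fun i : ↑I => L i) hle
  obtain ⟨c, hc⟩ := (Submodule.mem_span_range_iff_exists_fun ℝ).1 hspan
  refine ⟨∑ i : ↑I, c i • (i : X), fun g => ?_⟩
  have h3 := congrArg (fun ψ : WeakDual ℝ X →ₗ[ℝ] ℝ => ψ g) hc
  simp only [LinearMap.coe_sum, LinearMap.smul_apply, Finset.sum_apply] at h3
  have h4 : ∀ i : ↑I, (L i) g = g (i : X) := fun i => rfl
  have h5 : g (∑ i : ↑I, c i • (i : X)) = ∑ i : ↑I, c i * g (i : X) := by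
    rw [map_sum]
    congr 1
    funext i
    rw [map_smul, smul_eq_mul]
  simp only [ContinuousLinearMap.coe_coe] at h3
  have h6 : ∑ i : ↑I, c i * g (i : X) = φ g := by
    rw [← h3]
    apply Finset.sum_congr rfl
    intro i _
    rw [h4 i, smul_eq_mul]
  rw [h5, h6]

lemma exists_separating (K : Set (StrongDual ℝ X)) (hKc : IsCompact (StrongDual.toWeakDual '' K))
    (hKconv : Convex ℝ K) (f : StrongDual ℝ X) (S : Set (StrongDual ℝ X)) (hSK : S ⊆ K)
    (ε : ℝ) (hε : 0 < ε) (hfar : ∀ g ∈ wstarClosedConvexHull S, ε ≤ ‖f - g‖) :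
    ∃ x : X, ‖x‖ ≤ 1 ∧ ∀ g ∈ wstarClosedConvexHull S, g x + ε / 2 ≤ f x := by
  classical
  rcases S.eq_empty_or_nonempty with hSe | hSne
  · refine ⟨0, by simp, fun g hg => ?_⟩
    exfalso
    rw [wstarClosedConvexHull, hSe] at hg
    simpa using hg
  · set A : Set (WeakDual ℝ X) := closure (StrongDual.toWeakDual '' convexHull ℝ S) with hA
    have hhullK : convexHull ℝ S ⊆ K := convexHull_min hSK hKconv
    have hAsub : A ⊆ StrongDual.toWeakDual '' K :=
      closure_minimal (Set.image_mono hhullK) hKc.isClosed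
    have hAcomp : IsCompact A := hKc.of_isClosed_subset isClosed_closure hAsub
    have hAconv : Convex ℝ A := by
      refine Convex.closure ?_
      exact (convex_convexHull ℝ S).linear_image
        (StrongDual.toWeakDual (𝕜 := ℝ) (E := X)).toLinearMap
    set Bb : Set (WeakDual ℝ X) := StrongDual.toWeakDual '' Metric.closedBall f (ε / 2) with hBb
    have hBbeq : Bb = WeakDual.toStrongDual ⁻¹' Metric.closedBall f (ε / 2) := by
      ext w
      constructor
      · rintro ⟨g, hg, rfl⟩; exact hg
      · intro hw; exact ⟨WeakDual.toStrongDual w, hw, rfl⟩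
    have hBbcomp : IsCompact Bb := by
      rw [hBbeq]; exact WeakDual.isCompact_closedBall (𝕜 := ℝ) (E := X) f (ε / 2)
    have hBbconv : Convex ℝ Bb :=
      (convex_closedBall f (ε / 2)).linear_image
        (StrongDual.toWeakDual (𝕜 := ℝ) (E := X)).toLinearMap
    have hdisj : Disjoint A Bb := by
      rw [Set.disjoint_left]
      rintro w hwA ⟨g, hg, rfl⟩
      have hgC : g ∈ wstarClosedConvexHull S := hwA
      have h1 := hfar g hgC
      rw [Metric.mem_closedBall] at hg
      rw [← dist_eq_norm] at h1
      rw [dist_comm] at hg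
      linarith
    obtain ⟨φ, u, v, hφA, huv, hφB⟩ :=
      geometric_hahn_banach_compact_closed hAconv hAcomp hBbconv hBbcomp.isClosed hdisj
    obtain ⟨x₀, hx₀⟩ := weakdual_functional_eq_eval φ
    have hx0ne : x₀ ≠ 0 := by
      rintro rfl
      obtain ⟨g₀, hg₀⟩ := hSne
      have h1 : φ (StrongDual.toWeakDual g₀) < u :=
        hφA _ (subset_closure ⟨g₀, subset_convexHull ℝ _ hg₀, rfl⟩)
      have h2 : v < φ (StrongDual.toWeakDual f) :=
        hφB _ ⟨f, Metric.mem_closedBall_self (by linarith), rfl⟩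
      rw [hx₀] at h1 h2
      simp only [map_zero] at h1 h2
      linarith
    obtain ⟨d, hd1, hd2⟩ := exists_dual_vector ℝ x₀ (norm_ne_zero_iff.2 hx0ne)
    have hmem : f - (ε / 2) • d ∈ Metric.closedBall f (ε / 2) := by
      rw [Metric.mem_closedBall, dist_eq_norm]
      have : f - (ε / 2) • d - f = -((ε / 2) • d) := by abel
      rw [this, norm_neg, norm_smul, Real.norm_eq_abs, abs_of_pos (by linarith), hd1, mul_one]
    have h3 := hφB _ ⟨_, hmem, rfl⟩
    rw [hx₀] at h3
    have h4 : v < f x₀ - ε / 2 * ‖x₀‖ := by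
      have he : (StrongDual.toWeakDual (f - (ε / 2) • d)) x₀ = f x₀ - ε / 2 * d x₀ := by
        rfl
      rw [he, hd2] at h3
      simpa using h3
    have hnorm_pos : (0 : ℝ) < ‖x₀‖ := norm_pos_iff.2 hx0ne
    refine ⟨‖x₀‖⁻¹ • x₀, ?_, ?_⟩
    · rw [norm_smul, Real.norm_eq_abs, abs_of_pos (by positivity), inv_mul_cancel₀ hnorm_pos.ne']
    · intro g hg
      have h5 : g x₀ < u := by
        have := hφA (StrongDual.toWeakDual g) hg
        rwa [hx₀] at this
      have h6 : g x₀ + ε / 2 * ‖x₀‖ < f x₀ := by linarith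
      rw [map_smul, map_smul, smul_eq_mul, smul_eq_mul]
      have h7 : ‖x₀‖⁻¹ * (g x₀ + ε / 2 * ‖x₀‖) ≤ ‖x₀‖⁻¹ * f x₀ :=
        mul_le_mul_of_nonneg_left h6.le (by positivity)
      have h8 : ‖x₀‖⁻¹ * (g x₀ + ε / 2 * ‖x₀‖) = ‖x₀‖⁻¹ * g x₀ + ε / 2 := by
        field_simp
      linarith


set_option maxHeartbeats 1600000 in
lemma simons_core {X : Type*} [NormedAddCommGroup X] [NormedSpace ℝ X] [CompleteSpace X]
    (K B : Set (StrongDual ℝ X)) (hBK : B ⊆ K)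
    (hbdry : ∀ v : X, ∃ b ∈ B, ∀ g ∈ K, g v ≤ b v)
    (f : StrongDual ℝ X) (hf : f ∈ K) (x : ℕ → X) (hx : ∀ j, ‖x j‖ ≤ 1)
    (ε : ℝ) (hε : 0 < ε) :
    ∃ b ∈ B, ∀ n : ℕ,
      sInf (Set.range fun j => f (x j)) - ε ≤ sSup ((fun j => b (x j)) '' Set.Ici n) := by
  classical
  -- weights
  set lam : ℕ → ℝ := fun n => (2 : ℝ)⁻¹ ^ (n + 1) with hlam_def
  set t : ℕ → ℝ := fun n => (2 : ℝ)⁻¹ ^ n with ht_def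
  have hlam_pos : ∀ n, 0 < lam n := fun n => by positivity
  have ht_pos : ∀ n, 0 < t n := fun n => by positivity
  have ht_succ : ∀ n, t (n + 1) = lam n := fun n => rfl
  have ht_two : ∀ n, t n = 2 * lam n := by
    intro n
    simp only [hlam_def, ht_def, pow_succ]
    ring
  -- the sets W n
  set W : ℕ → Set X := fun n => closure (convexHull ℝ (x '' Set.Ici n)) with hW_def
  have hW_closed : ∀ n, IsClosed (W n) := fun n => isClosed_closure
  have hW_conv : ∀ n, Convex ℝ (W n) := fun n => (convex_convexHull ℝ _).closure
  have hxW : ∀ n j, n ≤ j → x j ∈ W n := fun n j hj =>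
    subset_closure (subset_convexHull ℝ _ ⟨j, hj, rfl⟩)
  have hW_anti : ∀ m n, m ≤ n → W n ⊆ W m := fun m n h =>
    closure_mono (convexHull_mono (Set.image_mono (Set.Ici_subset_Ici.2 h)))
  have hW_norm : ∀ n, ∀ y ∈ W n, ‖y‖ ≤ 1 := by
    intro n y hy
    have hsub : W n ⊆ Metric.closedBall 0 1 := by
      refine closure_minimal (convexHull_min ?_ (convex_closedBall 0 1)) Metric.isClosed_closedBall
      rintro v ⟨j, hj, rfl⟩
      simpa [Metric.mem_closedBall, dist_zero_right] using hx j
    simpa [Metric.mem_closedBall, dist_zero_right] using hsub hy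
  have hhalf_le : ∀ (g : StrongDual ℝ X) (c : ℝ) (n : ℕ),
      (∀ j, n ≤ j → g (x j) ≤ c) → ∀ y ∈ W n, g y ≤ c := by
    intro g c n hgc y hy
    refine closure_minimal (convexHull_min ?_ ?_) (isClosed_le g.cont continuous_const) hy
    · rintro v ⟨j, hj, rfl⟩; exact hgc j hj
    · exact convex_halfSpace_le ⟨fun a b => map_add g a b, fun r a => map_smul g r a⟩ c
  have hhalf_ge : ∀ (g : StrongDual ℝ X) (c : ℝ) (n : ℕ),
      (∀ j, n ≤ j → c ≤ g (x j)) → ∀ y ∈ W n, c ≤ g y := by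
    intro g c n hgc y hy
    refine closure_minimal (convexHull_min ?_ ?_) (isClosed_le continuous_const g.cont) hy
    · rintro v ⟨j, hj, rfl⟩; exact hgc j hj
    · exact convex_halfSpace_ge ⟨fun a b => map_add g a b, fun r a => map_smul g r a⟩ c
  -- the "max" function F
  have hbdry' := hbdry
  choose bb hbbB hbble using hbdry'
  have hbbK : ∀ v, bb v ∈ K := fun v => hBK (hbbB v)
  set F : X → ℝ := fun v => bb v v with hF_def
  have hFge : ∀ v, ∀ g ∈ K, g v ≤ F v := fun v g hg => hbble v g hg
  -- near-minimizing choices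
  have hchoice : ∀ (n : ℕ) (h : X), ∃ y, y ∈ W n ∧
      F (h + t n • y) ≤ sInf ((fun y => F (h + t n • y)) '' W n) + ε * lam n * t n := by
    intro n h
    have hne : ((fun y => F (h + t n • y)) '' W n).Nonempty :=
      ⟨_, ⟨x n, hxW n n le_rfl, rfl⟩⟩
    have hpos : 0 < ε * lam n * t n := by
      have := hlam_pos n; have := ht_pos n; positivity
    obtain ⟨a, ⟨y, hyW, rfl⟩, ha⟩ := exists_lt_of_csInf_lt hne
      (lt_add_of_pos_right _ hpos)
    exact ⟨y, hyW, ha.le⟩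
  choose pick hpickW hpickF using hchoice
  -- the recursion
  obtain ⟨H, hH0, hHs⟩ : ∃ H : ℕ → X, H 0 = 0 ∧
      ∀ n, H (n + 1) = H n + lam n • pick n (H n) :=
    ⟨fun n => Nat.rec 0 (fun n h => h + lam n • pick n h) n, rfl, fun n => rfl⟩
  set y : ℕ → X := fun n => pick n (H n) with hy_def
  have hyW : ∀ n, y n ∈ W n := fun n => hpickW n (H n)
  -- the series
  set a : ℕ → X := fun k => lam k • y k with ha_def
  have ha_norm : ∀ k, ‖a k‖ ≤ lam k := by
    intro k
    calc ‖lam k • y k‖ = |lam k| * ‖y k‖ := by rw [norm_smul, Real.norm_eq_abs]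
    _ ≤ lam k * 1 := by
        rw [abs_of_pos (hlam_pos k)]
        exact mul_le_mul_of_nonneg_left (hW_norm k _ (hyW k)) (hlam_pos k).le
    _ = lam k := mul_one _
  have hlam_sum : Summable lam := by
    have h1 : Summable (fun k : ℕ => (2 : ℝ)⁻¹ ^ k) :=
      summable_geometric_of_lt_one (by norm_num) (by norm_num)
    exact (summable_nat_add_iff 1).2 h1
  have ha_sum : Summable a := Summable.of_norm_bounded hlam_sum ha_norm
  have ha_sum' : ∀ n, Summable (fun k => a (k + n)) := fun n => (summable_nat_add_iff n).2 ha_sum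
  set T : ℕ → X := fun n => ∑' k, a (k + n) with hT_def
  have hT_hasSum : ∀ n, HasSum (fun k => a (k + n)) (T n) := fun n => (ha_sum' n).hasSum
  have hT_rec : ∀ n, T n = a n + T (n + 1) := by
    intro n
    have h1 : ∑' k, a (k + n) = a (0 + n) + ∑' k, a ((k + 1) + n) :=
      Summable.tsum_eq_zero_add (ha_sum' n)
    have h2 : (fun k => a ((k + 1) + n)) = fun k => a (k + (n + 1)) := by
      funext k; congr 1; omega
    simp only [hT_def]
    rw [h1, h2, Nat.zero_add]
  have hHT : ∀ n, H n + T n = T 0 := by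
    intro n
    induction n with
    | zero => rw [hH0, zero_add]
    | succ n ih =>
      calc H (n + 1) + T (n + 1) = H n + (a n + T (n + 1)) := by
            rw [hHs n]; simp only [ha_def]; abel
      _ = H n + T n := by rw [← hT_rec n]
      _ = T 0 := ih
  set z : X := T 0 with hz_def
  -- the tails ρ n
  set ρ : ℕ → X := fun n => (t n)⁻¹ • T n with hρ_def
  have hTρ : ∀ n, t n • ρ n = T n := fun n => smul_inv_smul₀ (ht_pos n).ne' (T n)
  have hzρ : ∀ n, H n + t n • ρ n = z := fun n => by rw [hTρ]; exact hHT n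
  have hρ0 : ρ 0 = z := by
    have h1 : t 0 = 1 := by simp [ht_def]
    simp only [hρ_def, hz_def, h1, inv_one, one_smul]
  -- tail weight sums
  have hlam_tail : ∀ n, HasSum (fun k => lam (k + n)) (t n) := by
    intro n
    have h2 : HasSum (fun k : ℕ => (2 : ℝ)⁻¹ ^ k) 2 := by
      have hgeo := hasSum_geometric_of_lt_one (r := (2 : ℝ)⁻¹) (by norm_num) (by norm_num)
      have heq : ((1 : ℝ) - 2⁻¹)⁻¹ = 2 := by norm_num
      rwa [heq] at hgeo
    have h3 := h2.mul_left (lam n)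
    have h4 : (fun k => lam n * (2 : ℝ)⁻¹ ^ k) = fun k => lam (k + n) := by
      funext k
      simp only [hlam_def, ← pow_add]
      congr 1
      omega
    rw [h4] at h3
    have h5 : lam n * 2 = t n := by rw [ht_two n]; ring
    rwa [h5] at h3
  -- ρ n ∈ W n
  have hρW : ∀ n, ρ n ∈ W n := by
    intro n
    set cw : ℕ → ℝ := fun m => ∑ k ∈ Finset.range m, lam (k + n) with hcw_def
    set Sm : ℕ → X := fun m => ∑ k ∈ Finset.range m, a (k + n) with hSm_def
    have hcw_pos : ∀ m, 0 < cw (m + 1) := by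
      intro m
      refine Finset.sum_pos (fun k _ => hlam_pos _) ⟨0, Finset.mem_range.2 (Nat.succ_pos m)⟩
    have hcw_t : Tendsto cw atTop (𝓝 (t n)) := (hlam_tail n).tendsto_sum_nat
    have hS_t : Tendsto Sm atTop (𝓝 (T n)) := (hT_hasSum n).tendsto_sum_nat
    have hP_t : Tendsto (fun m => (cw (m + 1))⁻¹ • Sm (m + 1)) atTop (𝓝 ((t n)⁻¹ • T n)) := by
      have h1 : Tendsto (fun m => cw (m + 1)) atTop (𝓝 (t n)) :=
        hcw_t.comp (tendsto_add_atTop_nat 1)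
      have h2 : Tendsto (fun m => Sm (m + 1)) atTop (𝓝 (T n)) :=
        hS_t.comp (tendsto_add_atTop_nat 1)
      exact (h1.inv₀ (ht_pos n).ne').smul h2
    refine (hW_closed n).mem_of_tendsto hP_t (Filter.Eventually.of_forall fun m => ?_)
    have hrepr : (cw (m + 1))⁻¹ • Sm (m + 1)
        = ∑ k ∈ Finset.range (m + 1), ((cw (m + 1))⁻¹ * lam (k + n)) • y (k + n) := by
      simp only [hSm_def, Finset.smul_sum]
      refine Finset.sum_congr rfl fun k _ => ?_
      simp only [ha_def, smul_smul]
    rw [hrepr]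
    refine (hW_conv n).sum_mem (fun k _ => (mul_pos (inv_pos.2 (hcw_pos m)) (hlam_pos _)).le) ?_
      (fun k _ => hW_anti n (k + n) (Nat.le_add_left n k) (hyW (k + n)))
    rw [← Finset.mul_sum]
    exact inv_mul_cancel₀ (hcw_pos m).ne'
  -- the boundary functional at z
  obtain ⟨b, hbB, hbz⟩ := hbdry z
  have hbK : b ∈ K := hBK hbB
  have hFz_le : F z ≤ b z := hbz (bb z) (hbbK z)
  have hσ_le : ∀ n, sInf ((fun y => F (H n + t n • y)) '' W n) ≤ b z := by
    intro n
    have hmem : F z ∈ (fun y => F (H n + t n • y)) '' W n :=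
      ⟨ρ n, hρW n, by show F (H n + t n • ρ n) = F z; rw [hzρ n]⟩
    have hbdd : BddBelow ((fun y => F (H n + t n • y)) '' W n) := by
      refine ⟨f (H n) - t n * ‖f‖, ?_⟩
      rintro r ⟨w, hwW, rfl⟩
      have h1 : f (H n + t n • w) ≤ F (H n + t n • w) := hFge _ f hf
      have h2 : f (H n + t n • w) = f (H n) + t n * f w := by
        rw [map_add, map_smul, smul_eq_mul]
      have h4 : ‖f w‖ ≤ ‖f‖ := by
        calc ‖f w‖ ≤ ‖f‖ * ‖w‖ := f.le_opNorm w
        _ ≤ ‖f‖ * 1 := mul_le_mul_of_nonneg_left (hW_norm n w hwW) (norm_nonneg f)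
        _ = ‖f‖ := mul_one _
      have h3 : -‖f‖ ≤ f w := by
        have := (abs_le.1 (by rwa [Real.norm_eq_abs] at h4)).1
        linarith
      have h5 := ht_pos n
      have h6 : t n * (-‖f‖) ≤ t n * f w := mul_le_mul_of_nonneg_left h3 h5.le
      nlinarith
    exact le_trans (csInf_le hbdd hmem) hFz_le
  have hpoint : ∀ n, b (H n) + t n * b (y n)
      ≤ sInf ((fun y => F (H n + t n • y)) '' W n) + ε * lam n * t n := by
    intro n
    have h1 : b (H n + t n • y n) ≤ F (H n + t n • y n) := hFge _ b hbK
    have h2 := hpickF n (H n)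
    have h3 : b (H n + t n • y n) = b (H n) + t n * b (y n) := by
      rw [map_add, map_smul, smul_eq_mul]
    rw [h3] at h1
    exact le_trans h1 h2
  have hbz_T : ∀ n, b z = b (H n) + t n * b (ρ n) := by
    intro n
    conv_lhs => rw [← hzρ n]
    rw [map_add, map_smul, smul_eq_mul]
  have hkey : ∀ n, b (y n) - ε * lam n ≤ b (ρ n) := by
    intro n
    have h1 := hσ_le n
    have h2 := hpoint n
    have h3 := hbz_T n
    have h5 := ht_pos n
    have h7 : t n * b (y n) ≤ t n * b (ρ n) + ε * lam n * t n := by linarith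
    have h8 : t n * (b (y n) - ε * lam n) ≤ t n * b (ρ n) := by
      have h9 : t n * (b (y n) - ε * lam n) = t n * b (y n) - ε * lam n * t n := by ring
      rw [h9]; linarith
    exact le_of_mul_le_mul_left h8 h5
  have hstep : ∀ n, b (ρ n) - ε * lam n ≤ b (ρ (n + 1)) := by
    intro n
    have hvec : t n • ρ n = lam n • y n + lam n • ρ (n + 1) := by
      rw [hTρ n, hT_rec n, ← ht_succ n, hTρ (n + 1)]
    have h1 : t n * b (ρ n) = lam n * b (y n) + lam n * b (ρ (n + 1)) := by
      have hb1 : b (t n • ρ n) = t n * b (ρ n) := by rw [map_smul, smul_eq_mul]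
      have hb2 : b (lam n • y n + lam n • ρ (n + 1))
          = lam n * b (y n) + lam n * b (ρ (n + 1)) := by
        rw [map_add, map_smul, map_smul, smul_eq_mul, smul_eq_mul]
      rw [← hb1, hvec, hb2]
    have h2 := hkey n
    have h3 := ht_two n
    have h4 := hlam_pos n
    have h5 : 2 * b (ρ n) = b (y n) + b (ρ (n + 1)) := by
      apply mul_left_cancel₀ h4.ne'
      calc lam n * (2 * b (ρ n)) = t n * b (ρ n) := by rw [h3]; ring
      _ = lam n * b (y n) + lam n * b (ρ (n + 1)) := h1
      _ = lam n * (b (y n) + b (ρ (n + 1))) := by ring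
    linarith
  have hlower : ∀ n, b z - ε ≤ b (ρ n) := by
    have key : ∀ n, b z - ε * (1 - t n) ≤ b (ρ n) := by
      intro n
      induction n with
      | zero =>
        have h1 : t 0 = 1 := by simp [ht_def]
        rw [hρ0, h1]
        simp
      | succ n ih =>
        have h1 := hstep n
        have h3 : t (n + 1) = t n - lam n := by rw [ht_succ n, ht_two n]; ring
        have h4 : ε * t (n + 1) = ε * t n - ε * lam n := by rw [h3]; ring
        have h5 : ε * (1 - t n) = ε - ε * t n := by ring
        have h6 : ε * (1 - t (n + 1)) = ε - ε * t (n + 1) := by ring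
        linarith
    intro n
    have h1 := key n
    have h2 := ht_pos n
    have h3 : 0 ≤ ε * t n := by positivity
    have h4 : ε * (1 - t n) = ε - ε * t n := by ring
    linarith
  -- conclusion
  have hfnorm : ∀ j, -‖f‖ ≤ f (x j) := by
    intro j
    have h4 : ‖f (x j)‖ ≤ ‖f‖ := by
      calc ‖f (x j)‖ ≤ ‖f‖ * ‖x j‖ := f.le_opNorm _
      _ ≤ ‖f‖ * 1 := mul_le_mul_of_nonneg_left (hx j) (norm_nonneg f)
      _ = ‖f‖ := mul_one _
    linarith [(abs_le.1 (by rwa [Real.norm_eq_abs] at h4)).1]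
  have hfz : sInf (Set.range fun j => f (x j)) ≤ f z := by
    refine hhalf_ge f _ 0 (fun j _ => ?_) z (by rw [← hρ0]; exact hρW 0)
    refine csInf_le ⟨-‖f‖, ?_⟩ ⟨j, rfl⟩
    rintro r ⟨j', rfl⟩
    exact hfnorm j'
  have hfb : f z ≤ b z := hbz f hf
  refine ⟨b, hbB, fun n => ?_⟩
  have hsbdd : BddAbove ((fun j => b (x j)) '' Set.Ici n) := by
    refine ⟨‖b‖, ?_⟩
    rintro r ⟨j, hj, rfl⟩
    have h4 : ‖b (x j)‖ ≤ ‖b‖ := by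
      calc ‖b (x j)‖ ≤ ‖b‖ * ‖x j‖ := b.le_opNorm _
      _ ≤ ‖b‖ * 1 := mul_le_mul_of_nonneg_left (hx j) (norm_nonneg b)
      _ = ‖b‖ := mul_one _
    exact (abs_le.1 (by rwa [Real.norm_eq_abs] at h4)).2
  have hρs : b (ρ n) ≤ sSup ((fun j => b (x j)) '' Set.Ici n) :=
    hhalf_le b _ n (fun j hj => le_csSup hsbdd ⟨j, hj, rfl⟩) (ρ n) (hρW n)
  have h1 := hlower n
  linarith

end Aux

/-- The (I)-property of boundaries of weak*-compact convex sets. -/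
theorem boundary_I_property
    {X : Type*} [NormedAddCommGroup X] [NormedSpace ℝ X] [CompleteSpace X]
    (K : Set (StrongDual ℝ X)) (hKc : IsCompact (StrongDual.toWeakDual '' K)) (hKconv : Convex ℝ K)
    (B : Set (StrongDual ℝ X)) (hBK : B ⊆ K)
    (hbdry : ∀ x : X, ∃ f ∈ B, ∀ g ∈ K, g x ≤ f x)
    (Bi : ℕ → Set (StrongDual ℝ X)) (hmono : ∀ i, Bi i ⊆ Bi (i + 1))
    (hunion : B = ⋃ i, Bi i) :
    K ⊆ closure (⋃ i, wstarClosedConvexHull (Bi i)) := by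
  classical
  intro f hf
  by_contra hf_not
  rw [Metric.mem_closure_iff] at hf_not
  push_neg at hf_not
  obtain ⟨ε₀, hε₀, hfar⟩ := hf_not
  have hmono' : ∀ i j, i ≤ j → Bi i ⊆ Bi j := by
    intro i j hij
    induction hij with
    | refl => exact subset_rfl
    | step _ ih => exact fun g hg => hmono _ (ih hg)
  have hwcchmono : ∀ i j, i ≤ j →
      wstarClosedConvexHull (Bi i) ⊆ wstarClosedConvexHull (Bi j) := fun i j hij =>
    Set.preimage_mono (closure_mono (Set.image_mono (convexHull_mono (hmono' i j hij))))
  have hsep : ∀ j : ℕ, ∃ xx : X, ‖xx‖ ≤ 1 ∧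
      ∀ g ∈ wstarClosedConvexHull (Bi j), g xx + ε₀ / 2 ≤ f xx := by
    intro j
    have hBiK : Bi j ⊆ K := fun g hg => hBK (hunion ▸ Set.mem_iUnion.2 ⟨j, hg⟩)
    refine exists_separating K hKc hKconv f (Bi j) hBiK ε₀ hε₀ ?_
    intro g hg
    have h1 := hfar g (Set.mem_iUnion.2 ⟨j, hg⟩)
    rw [dist_eq_norm] at h1
    exact h1
  choose xs hxs_norm hxs_sep using hsep
  have hbound : ∀ j, f (xs j) ∈ Set.Icc (-‖f‖) ‖f‖ := by
    intro j
    have h4 : ‖f (xs j)‖ ≤ ‖f‖ := by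
      calc ‖f (xs j)‖ ≤ ‖f‖ * ‖xs j‖ := f.le_opNorm _
      _ ≤ ‖f‖ * 1 := mul_le_mul_of_nonneg_left (hxs_norm j) (norm_nonneg f)
      _ = ‖f‖ := mul_one _
    have h5 := abs_le.1 (by rwa [Real.norm_eq_abs] at h4)
    exact ⟨h5.1, h5.2⟩
  obtain ⟨L, -, φ, hφmono, hφtend⟩ :=
    (isCompact_Icc (a := -‖f‖) (b := ‖f‖)).tendsto_subseq hbound
  rw [Metric.tendsto_atTop] at hφtend
  obtain ⟨N, hN⟩ := hφtend (ε₀ / 8) (by linarith)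
  set x' : ℕ → X := fun k => xs (φ (N + k)) with hx'
  have hx'_norm : ∀ k, ‖x' k‖ ≤ 1 := fun k => hxs_norm _
  have hx'_sep : ∀ k, ∀ g ∈ wstarClosedConvexHull (Bi k), g (x' k) + ε₀ / 2 ≤ f (x' k) := by
    intro k g hg
    refine hxs_sep (φ (N + k)) g ?_
    exact hwcchmono k _ (le_trans (Nat.le_add_left k N) hφmono.le_apply) hg
  have hx'_f : ∀ k, |f (x' k) - L| ≤ ε₀ / 8 := by
    intro k
    have h1 := hN (N + k) (Nat.le_add_right N k)
    rw [Function.comp_apply, Real.dist_eq] at h1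
    exact h1.le
  obtain ⟨b, hbB, hfin⟩ := simons_core K B hBK hbdry f hf x' hx'_norm (ε₀ / 8) (by linarith)
  obtain ⟨m, hbm⟩ := Set.mem_iUnion.1 (hunion ▸ hbB)
  have h1 := hfin m
  have hub : sSup ((fun j => b (x' j)) '' Set.Ici m) ≤ L + ε₀ / 8 - ε₀ / 2 := by
    refine csSup_le ⟨b (x' m), m, Set.mem_Ici.2 le_rfl, rfl⟩ ?_
    rintro r ⟨j, hj, rfl⟩
    have hbC : b ∈ wstarClosedConvexHull (Bi j) := by
      have hb1 : b ∈ Bi j := hmono' m j hj hbm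
      have hcl : StrongDual.toWeakDual b ∈ closure (StrongDual.toWeakDual '' convexHull ℝ (Bi j)) :=
        subset_closure (Set.mem_image_of_mem _ (subset_convexHull ℝ _ hb1))
      exact hcl
    have h2 := hx'_sep j b hbC
    have h3 := (abs_le.1 (hx'_f j)).2
    linarith
  have hlb : L - ε₀ / 8 ≤ sInf (Set.range fun j => f (x' j)) := by
    refine le_csInf ⟨f (x' 0), 0, rfl⟩ ?_
    rintro r ⟨j, rfl⟩
    linarith [(abs_le.1 (hx'_f j)).1]
  linarith
end

section
/- If a Banach space $X$ has a countable boundary $B \subseteq S_{X^*}$, then $X$ is separable. -/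
open NormedSpace Set Filter Topology

set_option maxHeartbeats 1600000 in
theorem separable_of_countable_boundary
    {X : Type*} [NormedAddCommGroup X] [NormedSpace ℝ X] [CompleteSpace X]
    (B : Set (StrongDual ℝ X)) (hB : IsBoundary B) (hcount : B.Countable) :
    TopologicalSpace.SeparableSpace X := by
  classical
  obtain ⟨hBnorm, hBatt⟩ := hB
  have hBne : B.Nonempty := by
    obtain ⟨f, hf, -⟩ := hBatt 0
    exact ⟨f, hf⟩
  obtain ⟨e, he⟩ := hcount.exists_eq_range hBne
  -- the "coordinate" map into ℝ^ℕ
  set T : X → (ℕ → ℝ) := fun x n => e n x with hT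
  set K : Set X := Metric.closedBall (0 : X) 1 with hK
  have h0K : (0 : X) ∈ K := Metric.mem_closedBall_self zero_le_one
  -- countable set whose image under T is dense in T '' K
  set P : Set (ℕ → ℝ) := T '' K with hP
  have hPne : Nonempty ↥P := ⟨⟨T 0, mem_image_of_mem _ h0K⟩⟩
  obtain ⟨s', hs'c, hs'd⟩ := TopologicalSpace.exists_countable_dense ↥P
  have hs'ne : s'.Nonempty := hs'd.nonempty
  have hcset : ((↑) '' s' : Set (ℕ → ℝ)).Countable := hs'c.image _
  obtain ⟨cfun, hcfun⟩ := hcset.exists_eq_range (hs'ne.image _)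
  have hcP : ∀ m, ∃ y, y ∈ K ∧ T y = cfun m := by
    intro m
    have h1 : cfun m ∈ ((↑) '' s' : Set (ℕ → ℝ)) := hcfun ▸ mem_range_self m
    obtain ⟨⟨p, hp⟩, -, rfl⟩ := h1
    exact hp
  choose dfun hdK hdT using hcP
  -- density: every x ∈ K is a σ(X,B)-limit of a sequence from (dfun)
  have hdense : ∀ x ∈ K, ∃ φ : ℕ → ℕ,
      Tendsto (fun k => T (dfun (φ k))) atTop (𝓝 (T x)) := by
    intro x hx
    have hTx : T x ∈ closure (range cfun) := by
      have h1 : T x ∈ P := mem_image_of_mem _ hx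
      have h2 : P ⊆ closure ((↑) '' s' : Set (ℕ → ℝ)) := by
        intro p hp
        have h3 : (⟨p, hp⟩ : ↥P) ∈ closure s' := hs'd _
        have h4 := image_closure_subset_closure_image
          (continuous_subtype_val (p := fun y => y ∈ P)) (mem_image_of_mem _ h3)
        simpa using h4
      rw [← hcfun]; exact h2 h1
    obtain ⟨y, hymem, hylim⟩ := mem_closure_iff_seq_limit.mp hTx
    choose φ hφ using hymem
    refine ⟨φ, ?_⟩
    have : (fun k => T (dfun (φ k))) = y := by
      funext k; rw [hdT (φ k), hφ k]
    rw [this]; exact hylim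
  -- the closed span of the dfun's
  set Zsub : Submodule ℝ X := (Submodule.span ℝ (range dfun)).topologicalClosure with hZ
  have hZclosed : IsClosed (Zsub : Set X) := Submodule.isClosed_topologicalClosure _
  -- KEY CLAIM: K ⊆ Z
  have hKZ : ∀ x ∈ K, x ∈ (Zsub : Set X) := by
    intro x hx
    by_contra hxZ
    -- Hahn-Banach separation
    obtain ⟨f, u0, hfu, hux⟩ := geometric_hahn_banach_closed_point Zsub.convex hZclosed hxZ
    have hfZ : ∀ z ∈ Zsub, f z = 0 := by
      intro z hz
      by_contra hfz
      have h2 : ((u0 + 1) / f z) * f z < u0 := by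
        have := hfu _ (Zsub.smul_mem ((u0 + 1) / f z) hz)
        simpa [smul_eq_mul] using this
      rw [div_mul_cancel₀ _ hfz] at h2
      linarith
    have hu0 : 0 < u0 := by
      have := hfu 0 (Zsub.zero_mem)
      simpa using this
    have hfx : 0 < f x := hu0.trans hux
    set g : StrongDual ℝ X := (f x)⁻¹ • f with hg
    have hgx : g x = 1 := by
      simp only [hg, ContinuousLinearMap.smul_apply, smul_eq_mul]
      exact inv_mul_cancel₀ hfx.ne'
    have hgZ : ∀ z ∈ Zsub, g z = 0 := by
      intro z hz
      simp only [hg, ContinuousLinearMap.smul_apply, smul_eq_mul, hfZ z hz, mul_zero]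
    have hgnorm : 0 < ‖g‖ := by
      rcases eq_or_lt_of_le (norm_nonneg g) with h0 | h0
      · exfalso
        have : g = 0 := by
          rw [← norm_eq_zero]; exact h0.symm
        rw [this] at hgx; simp at hgx
      · exact h0
    set d : ℝ := ‖g‖⁻¹ with hd
    have hdpos : 0 < d := inv_pos.mpr hgnorm
    -- the sequence approaching x
    obtain ⟨φ, hφ⟩ := hdense x hx
    set ds : ℕ → X := fun k => dfun (φ k) with hds
    set xs : ℕ → X := fun k => x - ds k with hxs
    have hxs2 : ∀ k, ‖xs k‖ ≤ 2 := by
      intro k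
      have h1 : ‖x‖ ≤ 1 := by simpa [hK, dist_eq_norm] using hx
      have h2 : ‖ds k‖ ≤ 1 := by
        have := hdK (φ k); simpa [hK, hds, dist_eq_norm] using this
      calc ‖x - ds k‖ ≤ ‖x‖ + ‖ds k‖ := norm_sub_le _ _
        _ ≤ 2 := by linarith
    have hgxs : ∀ k, g (xs k) = 1 := by
      intro k
      have hdZ : ds k ∈ Zsub := by
        have h1 : dfun (φ k) ∈ Submodule.span ℝ (range dfun) :=
          Submodule.subset_span (mem_range_self _)
        exact (Submodule.le_topologicalClosure _) h1
      simp [hxs, map_sub, hgx, hgZ _ hdZ]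
    have hftend : ∀ fb ∈ B, Tendsto (fun k => fb (xs k)) atTop (𝓝 0) := by
      intro fb hfb
      rw [he] at hfb
      obtain ⟨m, rfl⟩ := hfb
      have hcoord : Tendsto (fun k => e m (ds k)) atTop (𝓝 (e m x)) := by
        have h1 := (tendsto_pi_nhds.mp hφ) m
        exact h1
      have h2 : Tendsto (fun k => e m x - e m (ds k)) atTop (𝓝 (e m x - e m x)) :=
        tendsto_const_nhds.sub hcoord
      rw [sub_self] at h2
      have : (fun k => e m (xs k)) = fun k => e m x - e m (ds k) := by
        funext k; simp [hxs, map_sub]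
      rw [this]; exact h2
    -- the tail closed convex hulls
    set C : ℕ → Set X := fun n => closure (convexHull ℝ (xs '' (Ici n))) with hC
    have hxsC : ∀ n k, n ≤ k → xs k ∈ C n := fun n k hk =>
      subset_closure (subset_convexHull _ _ ⟨k, hk, rfl⟩)
    have hCconv : ∀ n, Convex ℝ (C n) := fun n => (convex_convexHull ℝ _).closure
    have hCclosed : ∀ n, IsClosed (C n) := fun n => isClosed_closure
    have hCsub : ∀ n (S : Set X), Convex ℝ S → IsClosed S →
        (∀ k, n ≤ k → xs k ∈ S) → C n ⊆ S := by
      intro n S hconv hcl hgen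
      exact closure_minimal
        (convexHull_min (by rintro w ⟨k, hk, rfl⟩; exact hgen k hk) hconv) hcl
    have hCmono : ∀ n k, n ≤ k → C k ⊆ C n := by
      intro n k hnk
      exact closure_mono (convexHull_mono (image_mono (Ici_subset_Ici.mpr hnk)))
    have hC2 : ∀ n w, w ∈ C n → ‖w‖ ≤ 2 := by
      intro n w hw
      have h1 := hCsub n (Metric.closedBall 0 2) (convex_closedBall _ _)
        Metric.isClosed_closedBall
        (fun k _ => by simpa [dist_eq_norm] using hxs2 k) hw
      simpa [dist_eq_norm] using h1
    have hCg : ∀ n w, w ∈ C n → g w = 1 := by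
      intro n w hw
      refine hCsub n {w | g w = 1} ?_ (isClosed_eq g.continuous continuous_const)
        (fun k _ => hgxs k) hw
      intro a ha b' hb' ta tb hta htb htab
      simp only [mem_setOf_eq] at *
      calc g (ta • a + tb • b') = ta * g a + tb * g b' := by
            simp [map_add, map_smul, smul_eq_mul]
        _ = 1 := by rw [ha, hb']; simpa using htab
    -- the weights
    set cc : ℕ → ℝ := fun m => ((2:ℝ)^m)⁻¹ with hcc
    have hccpos : ∀ m, 0 < cc m := fun m => inv_pos.mpr (pow_pos two_pos m)
    have hccS : ∀ m, cc (m+1) = cc m * (2:ℝ)⁻¹ := by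
      intro m; simp only [hcc, pow_succ, mul_inv]
    set eps : ℕ → ℝ := fun n => d * ((2:ℝ)^(2*n+3))⁻¹ with heps
    have hepspos : ∀ n, 0 < eps n := fun n =>
      mul_pos hdpos (inv_pos.mpr (pow_pos two_pos _))
    -- near-minimizing choice
    have hspec : ∀ n (uu : X), ∃ zz, zz ∈ C n ∧
        ∀ w ∈ C n, ‖uu + cc n • zz‖ ≤ ‖uu + cc n • w‖ + eps n := by
      intro n uu
      set S : Set ℝ := (fun w => ‖uu + cc n • w‖) '' C n with hS
      have hSne : S.Nonempty := ⟨_, mem_image_of_mem _ (hxsC n n le_rfl)⟩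
      have hSbdd : BddBelow S := by
        refine ⟨0, ?_⟩
        rintro _ ⟨w, -, rfl⟩
        positivity
      obtain ⟨_, ⟨zz, hzzC, rfl⟩, hlt⟩ :=
        exists_lt_of_csInf_lt hSne (lt_add_of_pos_right (sInf S) (hepspos n))
      refine ⟨zz, hzzC, fun w hw => ?_⟩
      have h1 : sInf S ≤ ‖uu + cc n • w‖ := csInf_le hSbdd (mem_image_of_mem _ hw)
      linarith
    choose F hFC hFmin using hspec
    -- the recursion
    obtain ⟨u, hu0, huS⟩ : ∃ u : ℕ → X, u 0 = 0 ∧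
        ∀ n, u (n+1) = u n + cc (n+1) • F n (u n) :=
      ⟨fun n => Nat.rec (motive := fun _ => X) 0
        (fun k uk => uk + cc (k+1) • F k uk) n, rfl, fun n => rfl⟩
    set z : ℕ → X := fun n => F n (u n) with hz
    have hzC : ∀ n, z n ∈ C n := fun n => hFC n (u n)
    have hzmin : ∀ n, ∀ w ∈ C n,
        ‖u n + cc n • z n‖ ≤ ‖u n + cc n • w‖ + eps n := fun n => hFmin n (u n)
    have huS' : ∀ n, u (n+1) = u n + cc (n+1) • z n := fun n => huS n
    -- u is Cauchy
    have hcau : CauchySeq u := by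
      apply cauchySeq_of_le_geometric (2:ℝ)⁻¹ 1 (by norm_num)
      intro n
      rw [dist_eq_norm, huS' n]
      have h1 : u n - (u n + cc (n+1) • z n) = -(cc (n+1) • z n) := by abel
      rw [h1, norm_neg, norm_smul, Real.norm_eq_abs, abs_of_pos (hccpos (n+1))]
      have h2 : ‖z n‖ ≤ 2 := hC2 n _ (hzC n)
      have h3 : cc (n+1) * ‖z n‖ ≤ cc (n+1) * 2 :=
        mul_le_mul_of_nonneg_left h2 (hccpos (n+1)).le
      have h4 : cc (n+1) * 2 = 1 * ((2:ℝ)⁻¹)^n := by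
        simp only [hcc, one_mul, inv_pow]
        rw [pow_succ]
        field_simp
      linarith [h3, h4.le]
    obtain ⟨zl, hzl⟩ := cauchySeq_tendsto_of_complete hcau
    -- the normalized tails
    set v : ℕ → X := fun n => (2:ℝ)^n • (zl - u n) with hv
    have huv : ∀ n, u n + cc n • v n = zl := by
      intro n
      simp only [hv, hcc, smul_smul]
      rw [inv_mul_cancel₀ (pow_ne_zero _ two_ne_zero), one_smul]
      abel
    have hvrec : ∀ n, v (n+1) = (2:ℝ) • v n - z n := by
      intro n
      simp only [hv, huS' n, hcc]
      rw [smul_sub, smul_sub, smul_sub]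
      have h1 : (2:ℝ)^(n+1) • (((2:ℝ)^(n+1))⁻¹ • z n) = z n :=
        smul_inv_smul₀ (pow_ne_zero _ two_ne_zero) _
      have h2 : (2:ℝ) • ((2:ℝ)^n • zl) = (2:ℝ)^(n+1) • zl := by
        rw [smul_smul, ← pow_succ']
      have h3 : (2:ℝ) • ((2:ℝ)^n • u n) = (2:ℝ)^(n+1) • u n := by
        rw [smul_smul, ← pow_succ']
      rw [smul_add, h1, h2, h3]
      abel
    have hvmid : ∀ n, v n = (2:ℝ)⁻¹ • (z n + v (n+1)) := by
      intro n
      rw [hvrec n, smul_add]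
      rw [smul_sub, smul_smul]
      norm_num
    -- v n ∈ C n
    have hvC : ∀ n, v n ∈ C n := by
      intro n
      set σ : ℕ → ℝ := fun m => ((2:ℝ)^(m+1))⁻¹ with hσ
      have hσpos : ∀ m, 0 < σ m := fun m => inv_pos.mpr (pow_pos two_pos _)
      have hσlt : ∀ m, σ m < 1 := by
        intro m
        rw [hσ]
        simp only
        rw [inv_lt_one_iff₀]
        right
        exact one_lt_pow₀ one_lt_two (Nat.succ_ne_zero m)
      have hσhalf : ∀ m, σ (m+1) * 2 = σ m := by
        intro m
        simp only [hσ]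
        rw [pow_succ, mul_inv, mul_assoc, inv_mul_cancel₀ (two_ne_zero), mul_one]
      set θ : ℕ → ℝ := fun m => (1 - σ m)/(1 - σ (m+1)) with hθ
      have hθ0 : ∀ m, 0 ≤ θ m := by
        intro m
        apply div_nonneg <;> linarith [hσlt m, hσlt (m+1)]
      have hθ1 : ∀ m, θ m ≤ 1 := by
        intro m
        rw [hθ, div_le_one (by linarith [hσlt (m+1)])]
        have := hσpos (m+1)
        have h2 : σ (m+1) ≤ σ m := by nlinarith [hσhalf m, hσpos (m+1)]
        linarith
      obtain ⟨ρ, hρ0, hρS⟩ : ∃ ρ : ℕ → X, ρ 0 = z n ∧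
          ∀ m, ρ (m+1) = θ m • ρ m + (1 - θ m) • z (n+m+1) :=
        ⟨fun m => Nat.rec (motive := fun _ => X) (z n)
          (fun m ρm => θ m • ρm + (1 - θ m) • z (n+m+1)) m, rfl, fun m => rfl⟩
      have hρC : ∀ m, ρ m ∈ C n := by
        intro m
        induction m with
        | zero => rw [hρ0]; exact hzC n
        | succ m ih =>
          rw [hρS m]
          refine hCconv n ih (hCmono n (n+m+1) (by omega) (hzC (n+m+1)))
            (hθ0 m) (by linarith [hθ1 m]) (by ring)
      have hclosedform : ∀ m, (1 - σ m) • ρ m = (2:ℝ)^n • (u (n+m+1) - u n) := by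
        intro m
        induction m with
        | zero =>
          rw [hρ0, huS' n]
          have h1 : u n + cc (n+1) • z n - u n = cc (n+1) • z n := by abel
          rw [h1, smul_smul]
          have h2 : (2:ℝ)^n * cc (n+1) = σ 0 := by
            simp only [hcc, hσ, pow_succ, zero_add, pow_one, mul_inv]
            rw [← mul_assoc, mul_inv_cancel₀ (pow_ne_zero _ two_ne_zero), one_mul]
            norm_num
          rw [h2]
          have h3 : (1:ℝ) - σ 0 = σ 0 := by
            have : σ 0 = (2:ℝ)⁻¹ := by simp [hσ]
            rw [this]; norm_num
          rw [h3]
        | succ m ih =>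
          have hidx : n + (m + 1) + 1 = (n + m + 1) + 1 := by ring
          rw [hidx, hρS m, huS' (n+m+1)]
          have hne : (1:ℝ) - σ (m+1) ≠ 0 := by linarith [hσlt (m+1)]
          have h1 : (1 - σ (m+1)) * θ m = 1 - σ m := by
            rw [hθ]
            field_simp
          have h2 : (1 - σ (m+1)) * (1 - θ m) = σ (m+1) := by
            rw [hθ]
            field_simp
            nlinarith [hσhalf m]
          have h3 : (2:ℝ)^n * cc (n+m+2) = σ (m+1) := by
            simp only [hcc, hσ]
            rw [← inv_pow, ← inv_pow]
            rw [show n+m+2 = n + (m+2) by ring, pow_add]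
            rw [← mul_assoc]
            rw [show (2:ℝ)^n * ((2:ℝ)⁻¹)^n = 1 by
              rw [← mul_pow]; norm_num]
            rw [one_mul]
          rw [smul_add, smul_smul, smul_smul, h1, h2]
          rw [ih]
          have h4 : u (n+m+1) + cc (n+m+1+1) • z (n+m+1) - u n
              = (u (n+m+1) - u n) + cc (n+m+2) • z (n+m+1) := by
            rw [show n+m+1+1 = n+m+2 by ring]; abel
          rw [h4, smul_add, smul_smul, h3]
      have hρeq : ∀ m, ρ m = (1 - σ m)⁻¹ • ((2:ℝ)^n • (u (n+m+1) - u n)) := by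
        intro m
        have hne : (1:ℝ) - σ m ≠ 0 := by linarith [hσlt m]
        rw [← hclosedform m, inv_smul_smul₀ hne]
      have hσtend : Tendsto σ atTop (𝓝 0) := by
        have h1 : Tendsto (fun m : ℕ => ((2:ℝ)⁻¹)^m) atTop (𝓝 0) :=
          tendsto_pow_atTop_nhds_zero_of_lt_one (by norm_num) (by norm_num)
        have h2 : Tendsto (fun m : ℕ => ((2:ℝ)⁻¹)^(m+1)) atTop (𝓝 0) :=
          h1.comp (tendsto_add_atTop_nat 1)
        have : σ = fun m => ((2:ℝ)⁻¹)^(m+1) := by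
          funext m; simp [hσ, inv_pow]
        rw [this]; exact h2
      have hρlim : Tendsto ρ atTop (𝓝 (v n)) := by
        have h1 : Tendsto (fun m => (1 - σ m)⁻¹) atTop (𝓝 1) := by
          have h2 : Tendsto (fun m => 1 - σ m) atTop (𝓝 1) := by
            have := tendsto_const_nhds.sub hσtend (α := ℕ) (f := fun _ => (1:ℝ))
            simpa using this
          have h3 := h2.inv₀ (by norm_num)
          simpa using h3
        have h4 : Tendsto (fun m => u (n+m+1)) atTop (𝓝 zl) := by
          have h5 : Tendsto (fun m : ℕ => n+m+1) atTop atTop := by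
            have := tendsto_add_atTop_nat (n+1)
            apply this.congr'
            filter_upwards with m
            ring
          exact hzl.comp h5
        have h6 : Tendsto (fun m => (2:ℝ)^n • (u (n+m+1) - u n)) atTop
            (𝓝 ((2:ℝ)^n • (zl - u n))) :=
          ((h4.sub tendsto_const_nhds).const_smul _)
        have h7 := h1.smul h6
        rw [one_smul] at h7
        have : ρ = fun m => (1 - σ m)⁻¹ • ((2:ℝ)^n • (u (n+m+1) - u n)) := by
          funext m; exact hρeq m
        rw [this]
        exact h7
      exact (hCclosed n).mem_of_tendsto hρlim (Eventually.of_forall hρC)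
    -- the norming functional of zl
    obtain ⟨b, hbB, hbzl⟩ := hBatt zl
    have hbnorm : ‖b‖ = 1 := hBnorm b hbB
    have hble : ∀ y, b y ≤ ‖y‖ := by
      intro y
      calc b y ≤ |b y| := le_abs_self _
        _ = ‖b y‖ := (Real.norm_eq_abs _).symm
        _ ≤ ‖b‖ * ‖y‖ := b.le_opNorm y
        _ = ‖y‖ := by rw [hbnorm, one_mul]
    -- g zl = 1, hence ‖zl‖ ≥ d
    have hgu : ∀ n, g (u n) = 1 - cc n := by
      intro n
      induction n with
      | zero => simp [hu0, hcc]
      | succ n ih =>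
        rw [huS' n, map_add, map_smul, ih, hCg n _ (hzC n)]
        rw [hccS n]
        simp [smul_eq_mul]
        ring
      
    have hgzl : g zl = 1 := by
      have h1 : Tendsto (fun n => g (u n)) atTop (𝓝 (g zl)) :=
        (g.continuous.tendsto zl).comp hzl
      have h2 : Tendsto (fun n => 1 - cc n) atTop (𝓝 1) := by
        have h3 : Tendsto cc atTop (𝓝 0) := by
          have h4 : Tendsto (fun m : ℕ => ((2:ℝ)⁻¹)^m) atTop (𝓝 0) :=
            tendsto_pow_atTop_nhds_zero_of_lt_one (by norm_num) (by norm_num)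
          have : cc = fun m => ((2:ℝ)⁻¹)^m := by funext m; simp [hcc, inv_pow]
          rw [this]; exact h4
        have := tendsto_const_nhds.sub h3 (α := ℕ) (f := fun _ => (1:ℝ))
        simpa using this
      have h5 : (fun n => g (u n)) = fun n => 1 - cc n := by
        funext n; exact hgu n
      rw [h5] at h1
      exact (tendsto_nhds_unique h1 h2)
    have hzld : d ≤ ‖zl‖ := by
      have h1 : ‖g zl‖ ≤ ‖g‖ * ‖zl‖ := g.le_opNorm zl
      rw [hgzl] at h1
      simp only [norm_one] at h1
      rw [hd]
      rw [inv_le_iff_one_le_mul₀ hgnorm]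
      linarith [h1]
    -- the key chain of inequalities
    have hkey : ∀ n, b (z n) - b (v (n+1)) ≤ (2:ℝ)^(n+1) * eps n := by
      intro n
      have h1 : ‖u n + cc n • z n‖ ≤ ‖zl‖ + eps n := by
        have h2 := hzmin n (v n) (hvC n)
        rwa [huv n] at h2
      have h2 : b (u n) + cc n * b (z n) ≤ ‖zl‖ + eps n := by
        have h3 : b (u n + cc n • z n) = b (u n) + cc n * b (z n) := by
          simp [map_add, map_smul, smul_eq_mul]
        rw [← h3]
        exact (hble _).trans h1
      have h3 : ‖zl‖ = b (u n) + cc n * ((2:ℝ)⁻¹ * (b (z n) + b (v (n+1)))) := by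
        rw [← hbzl]
        conv_lhs => rw [← huv n]
        rw [map_add, map_smul, smul_eq_mul, hvmid n, map_smul, map_add, smul_eq_mul]
      have h5 : cc (n+1) * (b (z n) - b (v (n+1))) ≤ eps n := by
        have h2' := h2
        rw [h3] at h2'
        rw [hccS n]
        ring_nf at h2' ⊢
        linarith
      have h6 : (2:ℝ)^(n+1) * (cc (n+1) * (b (z n) - b (v (n+1))))
          ≤ (2:ℝ)^(n+1) * eps n :=
        mul_le_mul_of_nonneg_left h5 (pow_pos two_pos _).le
      have h7 : (2:ℝ)^(n+1) * cc (n+1) = 1 := by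
        simp only [hcc]
        exact mul_inv_cancel₀ (pow_ne_zero _ two_ne_zero)
      have h8 : (2:ℝ)^(n+1) * (cc (n+1) * (b (z n) - b (v (n+1))))
          = b (z n) - b (v (n+1)) := by
        rw [← mul_assoc, h7, one_mul]
      rw [h8] at h6
      exact h6
    have hstep : ∀ n, b (v n) - (2:ℝ)^n * eps n ≤ b (v (n+1)) := by
      intro n
      have h1 : b (v n) = (2:ℝ)⁻¹ * (b (z n) + b (v (n+1))) := by
        rw [hvmid n, map_smul, map_add, smul_eq_mul]
      have h1' : b (z n) + b (v (n+1)) = 2 * b (v n) := by rw [h1]; ring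
      have h2' : b (z n) - b (v (n+1)) ≤ 2 * ((2:ℝ)^n * eps n) := by
        calc b (z n) - b (v (n+1)) ≤ (2:ℝ)^(n+1) * eps n := hkey n
          _ = 2 * ((2:ℝ)^n * eps n) := by rw [pow_succ]; ring
      linarith [h1', h2']
    -- induction: b (v n) ≥ d - (d/4)(1 - cc n)
    have hepsval : ∀ n, (2:ℝ)^n * eps n = d * cc n / 8 := by
      intro n
      simp only [heps, hcc]
      rw [show 2*n+3 = n + (n+3) by ring, pow_add]
      rw [mul_inv]
      have : (2:ℝ)^(n+3) = (2:ℝ)^n * 8 := by rw [pow_add]; norm_num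
      rw [this]
      field_simp
    have hind : ∀ n, d - (d/4) * (1 - cc n) ≤ b (v n) := by
      intro n
      induction n with
      | zero =>
        have hv0 : v 0 = zl := by simp [hv, hu0]
        rw [hv0, hbzl]
        have hcc0 : cc 0 = 1 := by simp [hcc]
        rw [hcc0]
        simpa using hzld
      | succ n ih =>
        have h1 := hstep n
        have h2 := hepsval n
        have h3 : cc (n+1) = cc n * (2:ℝ)⁻¹ := hccS n
        nlinarith
    have hbv34 : ∀ n, 3/4 * d ≤ b (v n) := by
      intro n
      have h1 := hind n
      have h2 : cc n ≤ 1 := by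
        rw [hcc]
        simp only
        rw [inv_le_one_iff₀]
        right
        exact one_le_pow₀ one_le_two
      have h3 : 0 ≤ cc n := (hccpos n).le
      nlinarith
    -- contradiction with b (xs k) → 0
    obtain ⟨N, hN⟩ : ∃ N, ∀ k ≥ N, b (xs k) ≤ d/2 := by
      have htb := hftend b hbB
      have h1 : ∀ᶠ k in atTop, b (xs k) < d/2 := by
        have := htb.eventually (eventually_lt_nhds (show (0:ℝ) < d/2 by linarith))
        exact this
      obtain ⟨N, hN⟩ := eventually_atTop.mp h1
      exact ⟨N, fun k hk => (hN k hk).le⟩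
    have hvNle : b (v N) ≤ d/2 := by
      refine hCsub N {w | b w ≤ d/2} ?_ (isClosed_le b.continuous continuous_const)
        (fun k hk => hN k hk) (hvC N)
      intro a ha b' hb' ta tb hta htb htab
      simp only [mem_setOf_eq] at *
      calc b (ta • a + tb • b') = ta * b a + tb * b b' := by
            simp [map_add, map_smul, smul_eq_mul]
        _ ≤ ta * (d/2) + tb * (d/2) := by
            apply add_le_add
            · exact mul_le_mul_of_nonneg_left ha hta
            · exact mul_le_mul_of_nonneg_left hb' htb
        _ = d/2 := by rw [← add_mul, htab, one_mul]
    have := hbv34 N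
    linarith
  -- PART D: separability
  set Acomb : Set X :=
    range (fun l : List (ℚ × ℕ) => (l.map (fun p => (p.1 : ℝ) • dfun p.2)).sum) with hA
  have hAc : Acomb.Countable := countable_range _
  have h0A : (0:X) ∈ Acomb := ⟨[], rfl⟩
  have hdA : ∀ m, dfun m ∈ Acomb := fun m => ⟨[(1, m)], by simp⟩
  have hAadd : ∀ a ∈ Acomb, ∀ b ∈ Acomb, a + b ∈ Acomb := by
    rintro _ ⟨l1, rfl⟩ _ ⟨l2, rfl⟩
    exact ⟨l1 ++ l2, by simp⟩
  have hAqs : ∀ (q : ℚ) a, a ∈ Acomb → (q:ℝ) • a ∈ Acomb := by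
    rintro q _ ⟨l, rfl⟩
    refine ⟨l.map (fun p => (q * p.1, p.2)), ?_⟩
    induction l with
    | nil => simp
    | cons p l ih =>
      simp only [List.map_cons, List.sum_cons, smul_add] at *
      rw [ih]
      congr 1
      push_cast
      rw [smul_smul]
  have hQseq : ∀ r : ℝ, ∃ q : ℕ → ℚ, Tendsto (fun k => (q k : ℝ)) atTop (𝓝 r) := by
    intro r
    have h1 : r ∈ closure (range ((↑) : ℚ → ℝ)) := by
      rw [Rat.denseRange_cast.closure_range]
      trivial
    obtain ⟨y, hy, hlim⟩ := mem_closure_iff_seq_limit.mp h1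
    choose q hq using hy
    refine ⟨q, ?_⟩
    have : (fun k => (q k : ℝ)) = y := funext hq
    rw [this]; exact hlim
  have hsmul0 : ∀ (r : ℝ) a, a ∈ Acomb → r • a ∈ closure Acomb := by
    intro r a ha
    obtain ⟨q, hq⟩ := hQseq r
    have h1 : Tendsto (fun k => (q k : ℝ) • a) atTop (𝓝 (r • a)) := hq.smul_const a
    exact mem_closure_of_tendsto h1 (Eventually.of_forall fun k => hAqs _ _ ha)
  have hsmulc : ∀ (r : ℝ) a, a ∈ closure Acomb → r • a ∈ closure Acomb := by
    intro r a ha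
    obtain ⟨y, hy, hlim⟩ := mem_closure_iff_seq_limit.mp ha
    have h1 : Tendsto (fun k => r • y k) atTop (𝓝 (r • a)) := hlim.const_smul r
    exact isClosed_closure.mem_of_tendsto h1
      (Eventually.of_forall fun k => hsmul0 r (y k) (hy k))
  have haddc : ∀ a ∈ closure Acomb, ∀ b ∈ closure Acomb, a + b ∈ closure Acomb := by
    intro a ha b hb
    obtain ⟨y1, hy1, h1⟩ := mem_closure_iff_seq_limit.mp ha
    obtain ⟨y2, hy2, h2⟩ := mem_closure_iff_seq_limit.mp hb
    exact isClosed_closure.mem_of_tendsto (h1.add h2)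
      (Eventually.of_forall fun k => subset_closure (hAadd _ (hy1 k) _ (hy2 k)))
  have hspan : (Submodule.span ℝ (range dfun) : Set X) ⊆ closure Acomb := by
    intro y hy
    induction hy using Submodule.span_induction with
    | mem w hw =>
      obtain ⟨m, rfl⟩ := hw
      exact subset_closure (hdA m)
    | zero => exact subset_closure h0A
    | add w1 w2 hw1 hw2 ih1 ih2 => exact haddc _ ih1 _ ih2
    | smul r w hw ih => exact hsmulc r w ih
  have hZA : (Zsub : Set X) ⊆ closure Acomb := by
    have h1 : (Zsub : Set X) = closure (Submodule.span ℝ (range dfun) : Set X) :=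
      Submodule.topologicalClosure_coe _
    rw [h1]
    exact closure_minimal hspan isClosed_closure
  have hdns : Dense Acomb := by
    rw [dense_iff_closure_eq]
    apply eq_univ_of_forall
    intro x
    have hne : ‖x‖ + 1 ≠ 0 := by positivity
    have hx1 : (‖x‖+1)⁻¹ • x ∈ K := by
      simp only [hK, Metric.mem_closedBall, dist_zero_right, norm_smul,
        Real.norm_eq_abs, abs_inv]
      rw [abs_of_pos (by positivity : (0:ℝ) < ‖x‖ + 1)]
      rw [inv_mul_le_iff₀ (by positivity)]
      linarith [norm_nonneg x]
    have hx2 : (‖x‖+1)⁻¹ • x ∈ closure Acomb := hZA (hKZ _ hx1)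
    have h3 := hsmulc (‖x‖+1) _ hx2
    rwa [smul_inv_smul₀ hne] at h3
  exact ⟨⟨Acomb, hAc, hdns⟩⟩
end

section
/- Let $K$ be a countable compact Hausdorff space. Then $C(K)$, the space of continuous real-valued functions on $K$ with sup norm, is isomorphically polyhedral. -/
open NormedSpace

/-- A normed space is polyhedral if the unit ball of every finite-dimensional
subspace is a polytope, i.e. has finitely many extreme points. -/
def IsPolyhedral (X : Type*) [NormedAddCommGroup X] [NormedSpace ℝ X] : Prop :=
  ∀ S : Subspace ℝ X, FiniteDimensional ℝ S →
    (Set.extremePoints ℝ (Metric.closedBall (0 : S) 1)).Finite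

/-- A normed space is isomorphically polyhedral if it is isomorphic to a polyhedral space. -/
def IsIsomorphicallyPolyhedral (X : Type u) [NormedAddCommGroup X] [NormedSpace ℝ X] : Prop :=
  ∃ (Y : Type u) (_ : NormedAddCommGroup Y) (_ : NormedSpace ℝ Y),
    IsPolyhedral Y ∧ Nonempty (X ≃L[ℝ] Y)

set_option linter.unusedSectionVars false
set_option linter.unusedVariables false
set_option linter.unreachableTactic false
set_option linter.unusedTactic false

section PolyhedronLemma

open Set


lemma finite_extremePoints_of_halfspaces {E : Type*} [AddCommGroup E] [Module ℝ E]
    {ι : Type*} (s : Finset ι) (L : ι → E →ₗ[ℝ] ℝ) (P : Set E)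
    (hP : ∀ x, x ∈ P ↔ ∀ i ∈ s, L i x ≤ 1) :
    (Set.extremePoints ℝ P).Finite := by
  classical
  set T : E → Set ι := fun x => {i | i ∈ s ∧ L i x = 1} with hT
  have himg : T '' (Set.extremePoints ℝ P) ⊆ {t | t ⊆ ↑s} := by
    rintro _ ⟨x, -, rfl⟩ i hi
    exact hi.1
  refine Set.Finite.of_finite_image (Set.Finite.subset (s.finite_toSet.finite_subsets) himg) ?_
  intro x hx y hy hxy
  by_contra hne
  set v := x - y with hv
  have hv0 : v ≠ 0 := sub_ne_zero.mpr hne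
  have hxP : x ∈ P := hx.1
  have hxle : ∀ i ∈ s, L i x ≤ 1 := (hP x).1 hxP
  have hyle : ∀ i ∈ s, L i y ≤ 1 := (hP y).1 hy.1
  -- tight constraints kill v
  have htight : ∀ i ∈ s, L i x = 1 → L i v = 0 := by
    intro i hi hix
    have : i ∈ T y := by rw [← hxy]; exact ⟨hi, hix⟩
    have hiy : L i y = 1 := this.2
    simp [hv, map_sub, hix, hiy]
  -- choose small t
  set g : ι → ℝ := fun i => if L i v = 0 then 1 else (1 - L i x) / |L i v| with hg
  set F : Finset ℝ := insert 1 (s.image g) with hF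
  have hFne : F.Nonempty := ⟨1, Finset.mem_insert_self _ _⟩
  set t : ℝ := F.min' hFne with ht
  have hgpos : ∀ i ∈ s, 0 < g i := by
    intro i hi
    by_cases h0 : L i v = 0
    · simp [hg, h0]
    · have hlt : L i x < 1 := lt_of_le_of_ne (hxle i hi) (fun h => h0 (htight i hi h))
      have : 0 < |L i v| := abs_pos.mpr h0
      have h1 : (0:ℝ) < 1 - L i x := by linarith
      simp only [hg, if_neg h0]
      exact div_pos h1 this
  have htpos : 0 < t := by
    apply (Finset.lt_min'_iff F hFne).mpr
    intro a ha
    rcases Finset.mem_insert.mp ha with rfl | ha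
    · norm_num
    · obtain ⟨i, hi, rfl⟩ := Finset.mem_image.mp ha
      exact hgpos i hi
  have hkey : ∀ i ∈ s, t * |L i v| ≤ 1 - L i x := by
    intro i hi
    by_cases h0 : L i v = 0
    · simp [h0, sub_nonneg.mpr (hxle i hi)]
    · have hle : t ≤ g i := Finset.min'_le F _ (Finset.mem_insert_of_mem (Finset.mem_image_of_mem g hi))
      have habs : 0 < |L i v| := abs_pos.mpr h0
      calc t * |L i v| ≤ g i * |L i v| := by nlinarith
        _ = 1 - L i x := by
            simp only [hg, if_neg h0]; field_simp
  have hmem : ∀ (ε : ℝ), |ε| ≤ t → x + ε • v ∈ P := by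
    intro ε hε
    rw [hP]
    intro i hi
    have : L i (x + ε • v) = L i x + ε * L i v := by simp [map_add, map_smul]
    rw [this]
    have h1 : ε * L i v ≤ |ε * L i v| := le_abs_self _
    have h2 : |ε * L i v| = |ε| * |L i v| := abs_mul _ _
    have h3 : |ε| * |L i v| ≤ t * |L i v| := by
      have := abs_nonneg (L i v); nlinarith [abs_nonneg (L i v)]
    have := hkey i hi
    linarith
  have hx1 : x + t • v ∈ P := hmem t (by rw [abs_of_pos htpos])
  have hx2 : x + (-t) • v ∈ P := hmem (-t) (by rw [abs_neg, abs_of_pos htpos])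
  have hseg : x ∈ openSegment ℝ (x + t • v) (x + (-t) • v) := by
    refine ⟨1/2, 1/2, by norm_num, by norm_num, by norm_num, ?_⟩
    rw [smul_add, smul_add]
    module
  have heq := ((mem_extremePoints.mp hx).2 _ hx1 _ hx2 hseg).1
  have htv : t • v = 0 := by
    have : x + t • v - x = 0 := by rw [heq]; abel
    simpa using this
  exact hv0 (by simpa [htpos.ne'] using htv)

end PolyhedronLemma

noncomputable def cseq (n : ℕ) : ℝ := 1 + ((n : ℝ) + 1)⁻¹

lemma cseq_pos (n : ℕ) : 0 < cseq n := by
  unfold cseq; positivity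

lemma cseq_one_lt (n : ℕ) : 1 < cseq n := by
  unfold cseq
  have : (0:ℝ) < (n:ℝ) + 1 := by positivity
  simp [inv_pos.mpr this]

lemma cseq_le_two (n : ℕ) : cseq n ≤ 2 := by
  unfold cseq
  have h1 : (1:ℝ) ≤ (n:ℝ) + 1 := by
    have : (0:ℝ) ≤ (n:ℝ) := Nat.cast_nonneg n
    linarith
  have := inv_le_one_of_one_le₀ h1
  linarith

lemma cseq_antitone : Antitone cseq := by
  intro m n h
  unfold cseq
  have h1 : (0:ℝ) < (m:ℝ) + 1 := by positivity
  have h2 : (m:ℝ) + 1 ≤ (n:ℝ) + 1 := by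
    have : ((m:ℝ)) ≤ (n:ℝ) := Nat.cast_le.mpr h
    linarith
  have := inv_anti₀ h1 h2
  linarith

set_option maxHeartbeats 1000000 in
lemma isPolyhedral_of_countable_boundary {X : Type*} [NormedAddCommGroup X] [NormedSpace ℝ X]
    (p : X → ℝ) (φ : ℕ → X →ₗ[ℝ] ℝ)
    (hφp : ∀ n x, |φ n x| ≤ p x)
    (hattain : ∀ x : X, ∃ n, |φ n x| = p x)
    (hnorm : ∀ x : X, ‖x‖ = ⨆ n, cseq n * |φ n x|)
    (hplip : ∀ x y : X, |p x - p y| ≤ ‖x - y‖)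
    (hpsmul : ∀ (a : ℝ) (x : X), p (a • x) = |a| * p x) :
    IsPolyhedral X := by
  classical
  -- basic facts
  have hbdd : ∀ x : X, BddAbove (Set.range fun n => cseq n * |φ n x|) := by
    intro x
    refine ⟨2 * p x, Set.forall_mem_range.mpr fun n => ?_⟩
    have h1 := hφp n x
    have h2 := cseq_le_two n
    have h3 := cseq_pos n
    have h0 : (0:ℝ) ≤ |φ n x| := abs_nonneg _
    nlinarith
  have hterm_le : ∀ (x : X) (n : ℕ), cseq n * |φ n x| ≤ ‖x‖ := by
    intro x n
    rw [hnorm x]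
    exact le_ciSup (hbdd x) n
  have hp_nonneg : ∀ x : X, 0 ≤ p x := fun x => le_trans (abs_nonneg _) (hφp 0 x)
  have hp_le_norm : ∀ x : X, p x ≤ ‖x‖ := by
    intro x
    obtain ⟨n, hn⟩ := hattain x
    calc p x = |φ n x| := hn.symm
      _ ≤ cseq n * |φ n x| := by nlinarith [cseq_one_lt n, abs_nonneg (φ n x)]
      _ ≤ ‖x‖ := hterm_le x n
  have hnorm_le : ∀ x : X, ‖x‖ ≤ 2 * p x := by
    intro x
    rw [hnorm x]
    apply ciSup_le
    intro n
    have h1 := hφp n x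
    have h2 := cseq_le_two n
    have h3 := cseq_pos n
    nlinarith [abs_nonneg (φ n x)]
  have hp_lt_norm : ∀ x : X, x ≠ 0 → p x < ‖x‖ := by
    intro x hx
    have hpx : 0 < p x := by
      have : 0 < ‖x‖ := norm_pos_iff.mpr hx
      have := hnorm_le x
      linarith
    obtain ⟨n, hn⟩ := hattain x
    calc p x < cseq n * |φ n x| := by rw [hn]; nlinarith [cseq_one_lt n]
      _ ≤ ‖x‖ := hterm_le x n
  -- main part
  intro S hS
  haveI := hS
  by_cases htriv : ∀ y : S, y = 0
  · refine Set.Finite.subset (Set.finite_singleton 0) ?_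
    intro y hy
    simp [htriv y]
  push_neg at htriv
  obtain ⟨y₀, hy₀⟩ := htriv
  -- compact sphere
  haveI : ProperSpace S := FiniteDimensional.proper ℝ S
  have hsph_compact : IsCompact (Metric.sphere (0 : S) 1) := isCompact_sphere 0 1
  have hsph_ne : (Metric.sphere (0 : S) 1).Nonempty := by
    refine ⟨(‖y₀‖)⁻¹ • y₀, ?_⟩
    have h0 : ‖(y₀:X)‖ ≠ 0 := norm_ne_zero_iff.mpr (by simpa using hy₀)
    simp [norm_smul, abs_of_nonneg (norm_nonneg y₀), inv_mul_cancel₀ h0]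
  have hqcont : Continuous (fun y : S => p (y : X)) := by
    apply Metric.continuous_iff.mpr
    intro y ε hε
    refine ⟨ε, hε, fun z hz => ?_⟩
    have h1 : |p (z : X) - p (y : X)| ≤ ‖(z : X) - (y : X)‖ := hplip _ _
    have h2 : ‖(z : X) - (y : X)‖ = ‖z - y‖ := by norm_cast
    rw [Real.dist_eq]
    rw [dist_eq_norm] at hz
    rw [h2] at h1
    linarith
  obtain ⟨ystar, hystar_mem, hystar⟩ := hsph_compact.exists_isMaxOn hsph_ne hqcont.continuousOn
  set α : ℝ := p (ystar : X) with hα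
  have hystar_norm : ‖ystar‖ = 1 := by simpa using hystar_mem
  have hystar_ne : (ystar : X) ≠ 0 := by
    intro h
    have : ystar = 0 := by exact_mod_cast Subtype.ext h
    rw [this] at hystar_norm; simp at hystar_norm
  have hα_lt : α < 1 := by
    have := hp_lt_norm (ystar : X) hystar_ne
    have hcn : ‖(ystar : X)‖ = ‖ystar‖ := rfl
    rw [hcn, hystar_norm] at this
    exact this
  have hα_pos : 0 < α := by
    have h1 := hnorm_le (ystar : X)
    have hcn : ‖(ystar : X)‖ = ‖ystar‖ := rfl
    rw [hcn, hystar_norm] at h1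
    linarith
  -- p ≤ α * ‖·‖ on S
  have hpα : ∀ y : S, p (y : X) ≤ α * ‖y‖ := by
    intro y
    by_cases hy : y = 0
    · subst hy
      have hz : p (0 : X) = 0 := by
        have := hpsmul 0 (0 : X)
        simpa using this
      have hc : ((0:S) : X) = 0 := rfl
      rw [hc, hz]
      simp
    · have hn0 : ‖y‖ ≠ 0 := norm_ne_zero_iff.mpr hy
      have hn0' : ‖(y:X)‖ ≠ 0 := norm_ne_zero_iff.mpr (by simpa using hy)
      have hmem : (‖y‖⁻¹ • y) ∈ Metric.sphere (0:S) 1 := by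
        simp [norm_smul, abs_of_nonneg (norm_nonneg y), inv_mul_cancel₀ hn0']
      have h1 : p ((‖y‖⁻¹ • y : S) : X) ≤ p (ystar : X) := hystar hmem
      have h2 : p ((‖y‖⁻¹ • y : S) : X) = ‖y‖⁻¹ * p (y : X) := by
        have hc : ((‖y‖⁻¹ • y : S) : X) = ‖y‖⁻¹ • (y : X) := rfl
        rw [hc, hpsmul]
        congr 1
        exact abs_of_nonneg (by positivity)
      rw [h2] at h1
      have hpos : 0 < ‖y‖ := lt_of_le_of_ne (norm_nonneg y) (Ne.symm hn0)
      calc p (y : X) = ‖y‖ * (‖y‖⁻¹ * p (y : X)) := by field_simp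
        _ ≤ ‖y‖ * α := by nlinarith
        _ = α * ‖y‖ := mul_comm _ _
  set δ : ℝ := 1 - α with hδ
  have hδpos : 0 < δ := by linarith
  obtain ⟨N, hN⟩ := exists_nat_one_div_lt hδpos
  -- the ball is a polyhedron
  set L : ℕ × Bool → (S →ₗ[ℝ] ℝ) :=
    fun i => ((if i.2 then (1:ℝ) else -1) * cseq i.1) • ((φ i.1).comp (S.subtype)) with hL
  set sfin : Finset (ℕ × Bool) := Finset.range (N+1) ×ˢ Finset.univ with hsfin
  have hball : Metric.closedBall (0 : S) 1 = {y : S | ∀ i ∈ sfin, L i y ≤ 1} := by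
    ext y
    simp only [Metric.mem_closedBall, dist_zero_right, Set.mem_setOf_eq]
    constructor
    · intro hy i hi
      have h1 : cseq i.1 * |φ i.1 (y : X)| ≤ ‖(y : X)‖ := hterm_le _ _
      have h2 : ‖(y : X)‖ = ‖y‖ := rfl
      have h3 : L i y = (if i.2 then (1:ℝ) else -1) * (cseq i.1 * φ i.1 (y : X)) := by
        obtain ⟨n, b⟩ := i
        cases b <;> simp [hL] <;> ring
      rw [h3]
      have h4 : (if i.2 then (1:ℝ) else -1) * (cseq i.1 * φ i.1 (y : X)) ≤ |cseq i.1 * φ i.1 (y : X)| := by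
        obtain ⟨n, b⟩ := i
        cases b
        · simpa using neg_le_abs (cseq n * φ n (y : X))
        · simpa using le_abs_self (cseq n * φ n (y : X))
      have h5 : |cseq i.1 * φ i.1 (y : X)| = cseq i.1 * |φ i.1 (y : X)| := by
        rw [abs_mul, abs_of_pos (cseq_pos i.1)]
      rw [h2] at h1
      calc (if i.2 then (1:ℝ) else -1) * (cseq i.1 * φ i.1 (y : X)) 
          ≤ |cseq i.1 * φ i.1 (y : X)| := h4
        _ = cseq i.1 * |φ i.1 (y : X)| := h5
        _ ≤ ‖y‖ := h1
        _ ≤ 1 := hy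
    · intro hy
      by_contra hlt
      push_neg at hlt
      have hy0 : y ≠ 0 := by
        intro h; rw [h] at hlt; norm_num at hlt
      have hynorm_pos : 0 < ‖y‖ := norm_pos_iff.mpr hy0
      -- every term is bounded by max 1 (ρ * ‖y‖)
      set ρ : ℝ := (1 + 1/((N:ℝ)+1)) * α with hρ
      have hρlt : ρ < 1 := by
        have h1 : 1 + 1/((N:ℝ)+1) < 1 + δ := by linarith
        have : ρ < (1 + δ) * α := by
          apply mul_lt_mul_of_pos_right h1 hα_pos
        calc ρ < (1+δ) * α := this
          _ = (1 + (1-α)) * α := by rw [hδ]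
          _ ≤ 1 := by nlinarith
      have hterm : ∀ n : ℕ, cseq n * |φ n (y : X)| ≤ max 1 (ρ * ‖y‖) := by
        intro n
        by_cases hn : n < N + 1
        · -- head: use hypothesis with both signs
          have hpos := hy (n, true) (by simp [hsfin, hn])
          have hneg := hy (n, false) (by simp [hsfin, hn])
          have h3t : L (n, true) y = cseq n * φ n (y : X) := by simp [hL]
          have h3f : L (n, false) y = -(cseq n * φ n (y : X)) := by simp [hL]
          rw [h3t] at hpos
          rw [h3f] at hneg
          have : cseq n * |φ n (y : X)| ≤ 1 := by
            have habs : |cseq n * φ n (y:X)| = cseq n * |φ n (y:X)| := by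
              rw [abs_mul, abs_of_pos (cseq_pos n)]
            rw [← habs]
            exact abs_le.mpr ⟨by linarith, hpos⟩
          exact this.trans (le_max_left _ _)
        · -- tail
          push_neg at hn
          have h1 : |φ n (y : X)| ≤ p (y : X) := hφp n _
          have h2 : p (y : X) ≤ α * ‖y‖ := hpα y
          have h3 : cseq n ≤ cseq N := cseq_antitone (by omega)
          have h4 : cseq N ≤ 1 + 1/((N:ℝ)+1) := by
            unfold cseq
            rw [one_div]
          have hc : cseq n * |φ n (y : X)| ≤ (1 + 1/((N:ℝ)+1)) * (α * ‖y‖) := by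
            have hnn : (0:ℝ) ≤ |φ n (y:X)| := abs_nonneg _
            have hcp := cseq_pos n
            nlinarith
          have : (1 + 1/((N:ℝ)+1)) * (α * ‖y‖) = ρ * ‖y‖ := by rw [hρ]; ring
          rw [this] at hc
          exact hc.trans (le_max_right _ _)
      have hle : ‖y‖ ≤ max 1 (ρ * ‖y‖) := by
        calc ‖y‖ = ⨆ n, cseq n * |φ n (y : X)| := hnorm (y : X)
          _ ≤ max 1 (ρ * ‖y‖) := ciSup_le hterm
      have hmaxlt : max 1 (ρ * ‖y‖) < ‖y‖ := by
        apply max_lt hlt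
        exact mul_lt_of_lt_one_left hynorm_pos hρlt
      linarith
  rw [hball]
  exact finite_extremePoints_of_halfspaces sfin L _ (fun x => Set.mem_setOf_eq ▸ Iff.rfl)

section Concrete

variable (K : Type) [TopologicalSpace K] [CompactSpace K] [T2Space K] [Countable K] [Nonempty K]

noncomputable def fonfEnum : ℕ → K := (exists_surjective_nat K).choose

lemma fonfEnum_surj : Function.Surjective (fonfEnum K) := (exists_surjective_nat K).choose_spec

variable {K}

lemma fonf_abs_apply_le (f : C(K, ℝ)) (n : ℕ) : |f (fonfEnum K n)| ≤ ‖f‖ := by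
  have := f.norm_coe_le_norm (fonfEnum K n)
  rwa [Real.norm_eq_abs] at this

lemma fonf_exists_eq_norm (f : C(K, ℝ)) : ∃ n, |f (fonfEnum K n)| = ‖f‖ := by
  obtain ⟨x, -, hx⟩ := isCompact_univ.exists_isMaxOn (Set.univ_nonempty)
    ((map_continuous f).abs.continuousOn (s := Set.univ))
  obtain ⟨n, rfl⟩ := fonfEnum_surj K x
  refine ⟨n, le_antisymm (fonf_abs_apply_le f n) ?_⟩
  apply (f.norm_le (abs_nonneg _)).mpr
  intro y
  rw [Real.norm_eq_abs]
  exact hx (Set.mem_univ y)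

variable (K)

noncomputable def fonfNormFun (f : C(K, ℝ)) : ℝ := ⨆ n, cseq n * |f (fonfEnum K n)|

variable {K}

lemma fonf_bdd (f : C(K, ℝ)) : BddAbove (Set.range fun n => cseq n * |f (fonfEnum K n)|) := by
  refine ⟨2 * ‖f‖, Set.forall_mem_range.mpr fun n => ?_⟩
  have h1 := fonf_abs_apply_le f n
  have h2 := cseq_le_two n
  have h3 := cseq_pos n
  nlinarith [abs_nonneg (f (fonfEnum K n))]

lemma fonf_term_le (f : C(K, ℝ)) (n : ℕ) : cseq n * |f (fonfEnum K n)| ≤ fonfNormFun K f :=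
  le_ciSup (fonf_bdd f) n

lemma fonf_norm_le (f : C(K, ℝ)) : ‖f‖ ≤ fonfNormFun K f := by
  obtain ⟨n, hn⟩ := fonf_exists_eq_norm f
  calc ‖f‖ = |f (fonfEnum K n)| := hn.symm
    _ ≤ cseq n * |f (fonfEnum K n)| := by nlinarith [cseq_one_lt n, abs_nonneg (f (fonfEnum K n))]
    _ ≤ fonfNormFun K f := fonf_term_le f n

lemma fonf_le_two_norm (f : C(K, ℝ)) : fonfNormFun K f ≤ 2 * ‖f‖ := by
  apply ciSup_le
  intro n
  have h1 := fonf_abs_apply_le f n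
  have h2 := cseq_le_two n
  have h3 := cseq_pos n
  nlinarith [abs_nonneg (f (fonfEnum K n))]

variable (K)

noncomputable def fonfAGNorm : AddGroupNorm C(K, ℝ) where
  toFun := fonfNormFun K
  map_zero' := by
    unfold fonfNormFun
    simp [ciSup_const]
  add_le' f g := by
    apply ciSup_le
    intro n
    have h1 : |(f + g) (fonfEnum K n)| ≤ |f (fonfEnum K n)| + |g (fonfEnum K n)| := by
      rw [ContinuousMap.add_apply]
      exact abs_add_le _ _
    have h2 := cseq_pos n
    calc cseq n * |(f + g) (fonfEnum K n)|
        ≤ cseq n * |f (fonfEnum K n)| + cseq n * |g (fonfEnum K n)| := by nlinarith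
      _ ≤ fonfNormFun K f + fonfNormFun K g := add_le_add (fonf_term_le f n) (fonf_term_le g n)
  neg' f := by
    unfold fonfNormFun
    congr 1
    funext n
    simp
  eq_zero_of_map_eq_zero' f hf := by
    have h := fonf_norm_le f
    have hf' : fonfNormFun K f = 0 := hf
    rw [hf'] at h
    exact norm_le_zero_iff.mp h

def FonfCopy : Type := C(K, ℝ)

variable {K}

def FonfCopy.toCM (f : FonfCopy K) : C(K, ℝ) := f

def FonfCopy.ofCM (f : C(K, ℝ)) : FonfCopy K := f

variable (K)

noncomputable instance : NormedAddCommGroup (FonfCopy K) :=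
  AddGroupNorm.toNormedAddCommGroup (E := C(K, ℝ)) (fonfAGNorm K)

noncomputable instance : Module ℝ (FonfCopy K) := inferInstanceAs (Module ℝ C(K, ℝ))

noncomputable instance : NormedSpace ℝ (FonfCopy K) where
  norm_smul_le a f := by
    have hdef : ∀ g : FonfCopy K, ‖g‖ = fonfNormFun K g.toCM := fun _ => rfl
    rw [hdef, hdef]
    apply ciSup_le
    intro n
    have h1 : ((a • f).toCM : C(K, ℝ)) (fonfEnum K n) = a * (f.toCM (fonfEnum K n)) := rfl
    rw [h1, abs_mul]
    have h2 := fonf_term_le (f.toCM) n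
    have h3 : (0:ℝ) ≤ |a| := abs_nonneg a
    have h4 := cseq_pos n
    calc cseq n * (|a| * |f.toCM (fonfEnum K n)|)
        = |a| * (cseq n * |f.toCM (fonfEnum K n)|) := by ring
      _ ≤ |a| * fonfNormFun K f.toCM := by nlinarith
      _ = ‖a‖ * fonfNormFun K f.toCM := by rw [Real.norm_eq_abs]

noncomputable def fonfEval (n : ℕ) : FonfCopy K →ₗ[ℝ] ℝ where
  toFun f := f.toCM (fonfEnum K n)
  map_add' f g := rfl
  map_smul' a f := rfl

lemma isPolyhedral_fonfCopy : IsPolyhedral (FonfCopy K) := by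
  apply isPolyhedral_of_countable_boundary (fun f : FonfCopy K => ‖f.toCM‖) (fonfEval K)
  · intro n x
    exact fonf_abs_apply_le x.toCM n
  · intro x
    exact fonf_exists_eq_norm x.toCM
  · intro x
    rfl
  · intro x y
    have h1 : |‖x.toCM‖ - ‖y.toCM‖| ≤ ‖x.toCM - y.toCM‖ := abs_norm_sub_norm_le _ _
    have h2 : x.toCM - y.toCM = (x - y).toCM := rfl
    rw [h2] at h1
    refine h1.trans ?_
    show ‖(x - y).toCM‖ ≤ fonfNormFun K (x - y).toCM
    exact fonf_norm_le _
  · intro a x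
    calc ‖(a • x).toCM‖ = ‖a • x.toCM‖ := rfl
      _ = ‖a‖ * ‖x.toCM‖ := norm_smul a x.toCM
      _ = |a| * ‖x.toCM‖ := by rw [Real.norm_eq_abs]

noncomputable def fonfEquivLin : C(K, ℝ) ≃ₗ[ℝ] FonfCopy K where
  toFun := FonfCopy.ofCM
  invFun := FonfCopy.toCM
  map_add' _ _ := rfl
  map_smul' _ _ := rfl
  left_inv _ := rfl
  right_inv _ := rfl

end Concrete

theorem continuousMap_countable_compact_isomorphically_polyhedral
    (K : Type) [TopologicalSpace K] [CompactSpace K] [T2Space K] [Countable K] :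
    IsIsomorphicallyPolyhedral C(K, ℝ) := by
  cases isEmpty_or_nonempty K with
  | inl h =>
    refine ⟨C(K, ℝ), inferInstance, inferInstance, ?_, ⟨ContinuousLinearEquiv.refl ℝ _⟩⟩
    intro S hS
    haveI : Subsingleton C(K, ℝ) := ⟨fun f g => ContinuousMap.ext fun x => isEmptyElim x⟩
    apply Set.Subsingleton.finite
    intro a ha b hb
    exact Subtype.ext (Subsingleton.elim _ _)
  | inr h =>
    refine ⟨FonfCopy K, inferInstance, inferInstance, isPolyhedral_fonfCopy K, ⟨?_⟩⟩
    refine { fonfEquivLin K with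
      continuous_toFun := ?_
      continuous_invFun := ?_ }
    · apply LipschitzWith.continuous (K := 2)
      apply LipschitzWith.of_dist_le_mul
      intro f g
      rw [dist_eq_norm, dist_eq_norm]
      show fonfNormFun K ((FonfCopy.ofCM f - FonfCopy.ofCM g : FonfCopy K)).toCM ≤ 2 * ‖f - g‖
      exact fonf_le_two_norm (f - g)
    · apply LipschitzWith.continuous (K := 1)
      apply LipschitzWith.of_dist_le_mul
      intro f g
      rw [dist_eq_norm, dist_eq_norm]
      push_cast
      rw [one_mul]
      show ‖f.toCM - g.toCM‖ ≤ fonfNormFun K (f - g).toCM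
      exact fonf_norm_le _
end

section
/- Let $B = \{\pm f_i\} \subseteq S_{X^*}$ be a countable boundary of a Banach space $X$, let $0 < \varepsilon_i < 1/2$ with $\varepsilon_i \to 0$, and let $t_i \in X^*$ satisfy $\|f_i - t_i\| < \varepsilon_i$. Then for every nonzero $x \in X$, $\sup_i |(1+2\varepsilon_i) t_i(x)| > \|x\|$. -/
open NormedSpace Filter

theorem perturbed_boundary_sup_gt
    {X : Type*} [NormedAddCommGroup X] [NormedSpace ℝ X] [CompleteSpace X]
    (f : ℕ → StrongDual ℝ X) (hnorm : ∀ i, ‖f i‖ = 1)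
    (hbdry : ∀ x : X, ∃ i, f i x = ‖x‖ ∨ (-(f i)) x = ‖x‖)
    (ε : ℕ → ℝ) (hε0 : ∀ i, 0 < ε i) (hε1 : ∀ i, ε i < 1 / 2)
    (hεlim : Tendsto ε atTop (nhds 0))
    (t : ℕ → StrongDual ℝ X) (ht : ∀ i, ‖f i - t i‖ < ε i) :
    ∀ x : X, x ≠ 0 → ‖x‖ < ⨆ i, |(1 + 2 * ε i) * t i x| := by
  intro x hx
  have hxpos : 0 < ‖x‖ := norm_pos_iff.mpr hx
  obtain ⟨i, hi⟩ := hbdry x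
  have hfx : |f i x| = ‖x‖ := by
    rcases hi with h | h
    · rw [h, abs_of_nonneg (norm_nonneg x)]
    · have : -(f i x) = ‖x‖ := by simpa using h
      rw [← abs_neg, this, abs_of_nonneg (norm_nonneg x)]
  -- bounded above
  have hb : BddAbove (Set.range fun i => |(1 + 2 * ε i) * t i x|) := by
    refine ⟨3 * ‖x‖, ?_⟩
    rintro _ ⟨j, rfl⟩
    have ht' : ‖t j‖ ≤ 3 / 2 := by
      have : ‖t j‖ - ‖f j‖ ≤ ‖f j - t j‖ := by
        rw [norm_sub_rev]; exact norm_sub_norm_le _ _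
      linarith [hnorm j, (ht j).le, (hε1 j).le]
    have h1 : |t j x| ≤ (3 / 2) * ‖x‖ := by
      calc |t j x| = ‖t j x‖ := (Real.norm_eq_abs _).symm
        _ ≤ ‖t j‖ * ‖x‖ := (t j).le_opNorm x
        _ ≤ (3 / 2) * ‖x‖ := by nlinarith [norm_nonneg x]
    have h2 : 0 < 1 + 2 * ε j := by nlinarith [hε0 j]
    have h3 : 1 + 2 * ε j ≤ 2 := by nlinarith [hε1 j]
    show |(1 + 2 * ε j) * t j x| ≤ 3 * ‖x‖
    rw [abs_mul, abs_of_pos h2]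
    nlinarith [abs_nonneg (t j x)]
  have key : ‖x‖ < |(1 + 2 * ε i) * t i x| := by
    have hdiff : |f i x - t i x| < ε i * ‖x‖ := by
      calc |f i x - t i x| = ‖(f i - t i) x‖ := by
            rw [Real.norm_eq_abs]; norm_num
        _ ≤ ‖f i - t i‖ * ‖x‖ := (f i - t i).le_opNorm x
        _ < ε i * ‖x‖ := by
            exact mul_lt_mul_of_pos_right (ht i) hxpos
    have htx : (1 - ε i) * ‖x‖ < |t i x| := by
      have := abs_sub_abs_le_abs_sub (f i x) (t i x)
      rw [hfx] at this
      nlinarith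
    have h2 : 0 < 1 + 2 * ε i := by nlinarith [hε0 i]
    rw [abs_mul, abs_of_pos h2]
    nlinarith [mul_lt_mul_of_pos_left htx h2,
      mul_nonneg (mul_nonneg (hε0 i).le (by linarith [hε1 i] : (0:ℝ) ≤ 1 - 2 * ε i)) hxpos.le]
  exact key.trans_le (le_ciSup hb i)
end

section
/- Let $B = \{\pm f_i\} \subseteq S_{X^*}$ be a countable boundary of $X$, take $0 < \varepsilon_i < 1/2$ with $\varepsilon_i \to 0$, and $t_i \in X^*$ with $\|f_i - t_i\| < \varepsilon_i$. Set $h_i = (1+2\varepsilon_i) t_i$ and define $|||x||| = \sup_i |h_i(x)|$. Then $|||\cdot|||$ is an equivalent norm on $X$, the set $\{\pm h_i / |||h_i|||^*\}$ normalized appropriately forms a boundary for $(X, |||\cdot|||)$ via $\{\pm h_i\}$, and no weak*-limit point of $\{\pm h_i\}$ attains its $|||\cdot|||$-dual norm (i.e., the boundary $\{\pm h_i\}$ has the strong separation property: no weak*-limit point of $\{\pm h_i\}$ is a support point of the dual unit ball $V^* = \{f : |||f||| \le 1\}$). -/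
open NormedSpace Filter

theorem lemma1
    {X : Type*} [NormedAddCommGroup X] [NormedSpace ℝ X] [CompleteSpace X]
    (f : ℕ → StrongDual ℝ X) (hnorm : ∀ i, ‖f i‖ = 1)
    (hbdry : ∀ x : X, ∃ i, f i x = ‖x‖ ∨ (-(f i)) x = ‖x‖)
    (ε : ℕ → ℝ) (hε0 : ∀ i, 0 < ε i) (hε1 : ∀ i, ε i < 1 / 2)
    (hεlim : Tendsto ε atTop (nhds 0))
    (t : ℕ → StrongDual ℝ X) (ht : ∀ i, ‖f i - t i‖ < ε i)
    (h : ℕ → StrongDual ℝ X) (hdef : ∀ i, h i = (1 + 2 * ε i) • t i)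
    (N : X → ℝ) (hN : ∀ x, N x = ⨆ i, |h i x|)
    (D : Set (StrongDual ℝ X)) (hD : D = {g | ∃ i, g = h i ∨ g = -h i}) :
    -- `|||·||| = N` is an equivalent norm on `X`
    ((∀ x y : X, N (x + y) ≤ N x + N y) ∧ (∀ (c : ℝ) (x : X), N (c • x) = |c| * N x) ∧
      (∀ x : X, x ≠ 0 → ‖x‖ < N x) ∧ ∃ C > 0, ∀ x : X, N x ≤ C * ‖x‖) ∧
    -- `{±h i}` is a boundary for the norm `N`: the sup is attained
    (∀ x : X, ∃ i, |h i x| = N x) ∧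
    -- (*)-property: no weak*-limit point of `{±h i}` supports the `N`-dual ball
    (∀ g : StrongDual ℝ X, StrongDual.toWeakDual g ∈ closure (StrongDual.toWeakDual '' (D \ {g})) →
      ∀ x : X, x ≠ 0 → g x < N x) := by
  -- upper bound on t
  have htx : ∀ i (x : X), |t i x| ≤ (1 + ε i) * ‖x‖ := by
    intro i x
    have h1 : |(f i - t i) x| ≤ ε i * ‖x‖ := by
      have := (f i - t i).le_opNorm x
      have h2 : ‖f i - t i‖ * ‖x‖ ≤ ε i * ‖x‖ :=
        mul_le_mul_of_nonneg_right (le_of_lt (ht i)) (norm_nonneg x)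
      calc |(f i - t i) x| = ‖(f i - t i) x‖ := (Real.norm_eq_abs _).symm
        _ ≤ ‖f i - t i‖ * ‖x‖ := this
        _ ≤ ε i * ‖x‖ := h2
    have h2 : |f i x| ≤ ‖x‖ := by
      have := (f i).le_opNorm x
      rw [hnorm i, one_mul] at this
      calc |f i x| = ‖f i x‖ := (Real.norm_eq_abs _).symm
        _ ≤ ‖x‖ := this
    have h3 : t i x = f i x - (f i - t i) x := by
      simp [ContinuousLinearMap.sub_apply]
    calc |t i x| = |f i x - (f i - t i) x| := by rw [h3]
      _ ≤ |f i x| + |(f i - t i) x| := abs_sub _ _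
      _ ≤ ‖x‖ + ε i * ‖x‖ := add_le_add h2 h1
      _ = (1 + ε i) * ‖x‖ := by ring
  -- lower bound on t when f attains the norm
  have htxl : ∀ i (x : X), |f i x| = ‖x‖ → (1 - ε i) * ‖x‖ ≤ |t i x| := by
    intro i x hfx
    have h1 : |(f i - t i) x| ≤ ε i * ‖x‖ := by
      have := (f i - t i).le_opNorm x
      have h2 : ‖f i - t i‖ * ‖x‖ ≤ ε i * ‖x‖ :=
        mul_le_mul_of_nonneg_right (le_of_lt (ht i)) (norm_nonneg x)
      calc |(f i - t i) x| = ‖(f i - t i) x‖ := (Real.norm_eq_abs _).symm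
        _ ≤ ‖f i - t i‖ * ‖x‖ := this
        _ ≤ ε i * ‖x‖ := h2
    have h3 : f i x = t i x + (f i - t i) x := by
      simp [ContinuousLinearMap.sub_apply]
    have h4 : |f i x| ≤ |t i x| + |(f i - t i) x| := by
      rw [h3]; exact abs_add_le _ _
    have := hfx ▸ h4
    linarith
  -- |h i x| in terms of |t i x|
  have hhx : ∀ i (x : X), |h i x| = (1 + 2 * ε i) * |t i x| := by
    intro i x
    rw [hdef i]
    have hpos : (0:ℝ) ≤ 1 + 2 * ε i := by have := hε0 i; linarith
    simp only [ContinuousLinearMap.smul_apply, smul_eq_mul, abs_mul, abs_of_nonneg hpos]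
  -- basic upper bound
  have hub : ∀ i (x : X), |h i x| ≤ (1 + 4 * ε i) * ‖x‖ := by
    intro i x
    rw [hhx i x]
    have h1 := htx i x
    have h2 : (0:ℝ) ≤ 1 + 2 * ε i := by have := hε0 i; linarith
    have h3 : (1 + 2 * ε i) * |t i x| ≤ (1 + 2 * ε i) * ((1 + ε i) * ‖x‖) :=
      mul_le_mul_of_nonneg_left h1 h2
    have h4 : (1 + 2 * ε i) * ((1 + ε i) * ‖x‖) ≤ (1 + 4 * ε i) * ‖x‖ := by
      have hε := hε0 i
      have hε' := hε1 i
      have hx := norm_nonneg x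
      nlinarith [mul_nonneg (mul_nonneg hε.le (by linarith : (0:ℝ) ≤ 1 - 2 * ε i)) hx]
    linarith
  have hub3 : ∀ i (x : X), |h i x| ≤ 3 * ‖x‖ := by
    intro i x
    have h1 := hub i x
    have h2 : (1 + 4 * ε i) * ‖x‖ ≤ 3 * ‖x‖ := by
      have hε' := hε1 i
      have hx := norm_nonneg x
      nlinarith
    linarith
  have hBdd : ∀ x : X, BddAbove (Set.range fun i => |h i x|) := by
    intro x
    exact ⟨3 * ‖x‖, by rintro y ⟨i, rfl⟩; exact hub3 i x⟩
  have hle : ∀ (x : X) (i : ℕ), |h i x| ≤ N x := by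
    intro x i
    rw [hN]
    exact le_ciSup (hBdd x) i
  -- lower bound
  have hlow : ∀ x : X, ∃ i, (1 + ε i * (1 - 2 * ε i)) * ‖x‖ ≤ |h i x| := by
    intro x
    obtain ⟨i, hi⟩ := hbdry x
    have hfx : |f i x| = ‖x‖ := by
      rcases hi with hi | hi
      · rw [hi]; exact abs_of_nonneg (norm_nonneg x)
      · have : f i x = -‖x‖ := by
          have : -(f i x) = ‖x‖ := by simpa using hi
          linarith
        rw [this, abs_neg]; exact abs_of_nonneg (norm_nonneg x)
    refine ⟨i, ?_⟩
    rw [hhx i x]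
    have h1 := htxl i x hfx
    have h2 : (0:ℝ) ≤ 1 + 2 * ε i := by have := hε0 i; linarith
    have h3 : (1 + 2 * ε i) * ((1 - ε i) * ‖x‖) ≤ (1 + 2 * ε i) * |t i x| :=
      mul_le_mul_of_nonneg_left h1 h2
    have h4 : (1 + ε i * (1 - 2 * ε i)) * ‖x‖ ≤ (1 + 2 * ε i) * ((1 - ε i) * ‖x‖) := by
      have hx := norm_nonneg x
      nlinarith
    linarith
  have hδpos : ∀ i, 0 < ε i * (1 - 2 * ε i) := by
    intro i
    have h1 := hε0 i
    have h2 := hε1 i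
    nlinarith
  -- norm upper bound
  have hNub : ∀ x : X, N x ≤ 3 * ‖x‖ := by
    intro x
    rw [hN]
    exact ciSup_le fun i => hub3 i x
  -- norm lower bound (strict for x ≠ 0)
  have hNlow : ∀ x : X, x ≠ 0 → ‖x‖ < N x := by
    intro x hx
    obtain ⟨i, hi⟩ := hlow x
    have hxpos : 0 < ‖x‖ := norm_pos_iff.mpr hx
    have hδ := hδpos i
    have : ‖x‖ < (1 + ε i * (1 - 2 * ε i)) * ‖x‖ := by nlinarith
    exact lt_of_lt_of_le this (le_trans hi (hle x i))
  have hN0 : N 0 = 0 := by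
    rw [hN]
    simp
  -- positive homogeneity helper
  have hNsmul_le : ∀ (c : ℝ) (x : X), N (c • x) ≤ |c| * N x := by
    intro c x
    rw [hN (c • x)]
    refine ciSup_le fun i => ?_
    have : h i (c • x) = c * h i x := by simp
    rw [this, abs_mul]
    exact mul_le_mul_of_nonneg_left (hle x i) (abs_nonneg c)
  have hNsmul : ∀ (c : ℝ) (x : X), N (c • x) = |c| * N x := by
    intro c x
    rcases eq_or_ne c 0 with rfl | hc
    · simp [hN0]
    · refine le_antisymm (hNsmul_le c x) ?_
      have h1 : N x ≤ |c⁻¹| * N (c • x) := by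
        have := hNsmul_le c⁻¹ (c • x)
        rwa [inv_smul_smul₀ hc] at this
      have h2 : |c| * N x ≤ |c| * (|c⁻¹| * N (c • x)) :=
        mul_le_mul_of_nonneg_left h1 (abs_nonneg c)
      have h3 : |c| * (|c⁻¹| * N (c • x)) = N (c • x) := by
        rw [abs_inv, ← mul_assoc, mul_inv_cancel₀ (abs_ne_zero.mpr hc), one_mul]
      linarith
  -- subadditivity
  have hNadd : ∀ x y : X, N (x + y) ≤ N x + N y := by
    intro x y
    rw [hN (x + y)]
    refine ciSup_le fun i => ?_
    have h1 : h i (x + y) = h i x + h i y := map_add _ _ _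
    calc |h i (x + y)| = |h i x + h i y| := by rw [h1]
      _ ≤ |h i x| + |h i y| := abs_add_le _ _
      _ ≤ N x + N y := add_le_add (hle x i) (hle y i)
  -- attainment of the supremum
  have hattain : ∀ x : X, ∃ i, |h i x| = N x := by
    intro x
    rcases eq_or_ne x 0 with rfl | hx
    · exact ⟨0, by simp [hN0]⟩
    · obtain ⟨i₀, hi₀⟩ := hlow x
      set δ := ε i₀ * (1 - 2 * ε i₀) with hδdef
      have hδ : 0 < δ := hδpos i₀
      have hxpos : 0 < ‖x‖ := norm_pos_iff.mpr hx
      have hev : ∀ᶠ i in atTop, ε i < δ / 4 :=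
        hεlim.eventually (gt_mem_nhds (by linarith))
      obtain ⟨M, hM⟩ := eventually_atTop.mp hev
      have htail : ∀ i, M ≤ i → |h i x| ≤ |h i₀ x| := by
        intro i hi
        have h1 := hub i x
        have h2 : (1 + 4 * ε i) * ‖x‖ ≤ (1 + δ) * ‖x‖ := by
          have := hM i hi
          nlinarith
        calc |h i x| ≤ (1 + 4 * ε i) * ‖x‖ := h1
          _ ≤ (1 + δ) * ‖x‖ := h2
          _ ≤ |h i₀ x| := hi₀
      set s : Finset ℕ := insert i₀ (Finset.range M) with hs
      have hsne : s.Nonempty := ⟨i₀, Finset.mem_insert_self _ _⟩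
      obtain ⟨j, hj, hjmax⟩ := s.exists_max_image (fun i => |h i x|) hsne
      have hall : ∀ i, |h i x| ≤ |h j x| := by
        intro i
        by_cases hmem : i ∈ s
        · exact hjmax i hmem
        · have hiM : M ≤ i := by
            by_contra hcon
            exact hmem (Finset.mem_insert_of_mem (Finset.mem_range.mpr (not_le.mp hcon)))
          exact le_trans (htail i hiM) (hjmax i₀ (Finset.mem_insert_self _ _))
      refine ⟨j, le_antisymm (hle x j) ?_⟩
      rw [hN]
      exact ciSup_le hall
  refine ⟨⟨hNadd, hNsmul, hNlow, ⟨3, by norm_num, hNub⟩⟩, hattain, ?_⟩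
  -- (*) property
  intro g hg x hx
  have key : ∀ η : ℝ, 0 < η → g x ≤ ‖x‖ + 2 * η := by
    intro η hη
    -- choose M with 4 ε i ‖x‖ < η for i ≥ M
    have hlim : Tendsto (fun i => 4 * ε i * ‖x‖) atTop (nhds 0) := by
      have := (hεlim.const_mul (4:ℝ)).mul_const ‖x‖
      simpa using this
    obtain ⟨M, hM⟩ := eventually_atTop.mp (hlim.eventually (gt_mem_nhds hη))
    -- the finite exceptional set
    set F : Set (StrongDual ℝ X) := (h '' Set.Iio M) ∪ ((fun j => -h j) '' Set.Iio M) with hF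
    have hFfin : F.Finite :=
      ((Set.finite_Iio M).image h).union ((Set.finite_Iio M).image _)
    set S₂ : Set (StrongDual ℝ X) := (D \ {g}) \ F with hS₂
    -- g is in the closure of the image of S₂
    have hg2 : StrongDual.toWeakDual g ∈ closure (StrongDual.toWeakDual '' S₂) := by
      have hsplit : StrongDual.toWeakDual '' (D \ {g}) ⊆
          StrongDual.toWeakDual '' S₂ ∪ StrongDual.toWeakDual '' ((D \ {g}) ∩ F) := by
        rintro _ ⟨a, ha, rfl⟩
        by_cases haF : a ∈ F
        · exact Or.inr ⟨a, ⟨ha, haF⟩, rfl⟩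
        · exact Or.inl ⟨a, ⟨ha, haF⟩, rfl⟩
      have h1 : StrongDual.toWeakDual g ∈
          closure (StrongDual.toWeakDual '' S₂ ∪ StrongDual.toWeakDual '' ((D \ {g}) ∩ F)) :=
        closure_mono hsplit hg
      rw [closure_union] at h1
      rcases h1 with h1 | h1
      · exact h1
      · exfalso
        have hfin : (StrongDual.toWeakDual '' ((D \ {g}) ∩ F)).Finite :=
          (hFfin.inter_of_right _).image _
        rw [hfin.isClosed.closure_eq] at h1
        obtain ⟨a, ⟨⟨_, hag⟩, _⟩, heq⟩ := h1
        have : a = g := StrongDual.toWeakDual.injective heq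
        exact hag this
    -- evaluation neighborhood
    set U : Set (WeakDual ℝ X) := {φ | |φ x - g x| < η} with hU
    have hUopen : IsOpen U := by
      have hc : Continuous fun φ : WeakDual ℝ X => |φ x - g x| :=
        ((WeakDual.eval_continuous x).sub continuous_const).abs
      have : U = (fun φ : WeakDual ℝ X => |φ x - g x|) ⁻¹' Set.Iio η := rfl
      rw [this]
      exact isOpen_Iio.preimage hc
    have hgU : StrongDual.toWeakDual g ∈ U := by
      simp only [hU, Set.mem_setOf_eq]
      have : (StrongDual.toWeakDual g) x = g x := rfl
      rw [this]
      simpa using hη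
    obtain ⟨φ, hφU, hφS⟩ := mem_closure_iff.mp hg2 U hUopen hgU
    obtain ⟨s', hs', rfl⟩ := hφS
    obtain ⟨⟨hsD, _⟩, hsF⟩ := hs'
    rw [hD] at hsD
    obtain ⟨i, hsi⟩ := hsD
    have hiM : M ≤ i := by
      by_contra hcon
      apply hsF
      rcases hsi with hsi | hsi
      · exact Or.inl ⟨i, not_le.mp hcon, hsi.symm⟩
      · exact Or.inr ⟨i, not_le.mp hcon, hsi.symm⟩
    have hsx : |s' x| = |h i x| := by
      rcases hsi with rfl | rfl
      · rfl
      · simp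
    have hclose : |s' x - g x| < η := hφU
    have hbound : |s' x| ≤ ‖x‖ + η := by
      rw [hsx]
      have h1 := hub i x
      have h2 := hM i hiM
      nlinarith [norm_nonneg x]
    have : g x ≤ |g x| := le_abs_self _
    have h3 : |g x| ≤ |s' x| + |g x - s' x| := by
      calc |g x| = |s' x + (g x - s' x)| := by ring_nf
        _ ≤ |s' x| + |g x - s' x| := abs_add_le _ _
    have h4 : |g x - s' x| = |s' x - g x| := abs_sub_comm _ _
    linarith
  have hgle : g x ≤ ‖x‖ := by
    refine le_of_forall_pos_le_add fun η hη => ?_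
    have := key (η / 2) (by linarith)
    linarith
  exact lt_of_le_of_lt hgle (hNlow x hx)
end

section
/- Let $X$ be a separable Banach space with a boundary $B$ (for some equivalent norm) that is summable with respect to a normalized M-basis $\{x_i\}$ with bounded biorthogonal functionals $\{x_i^*\}$, i.e., $\sum_{i=1}^\infty |f(x_i)| < \infty$ for all $f \in B$ and $\sup_i \|x_i^*\| < \infty$. Then the operator $T : X \to c_0$ defined by $Tx = (x_i^*(x))_{i=1}^\infty$ is a well-defined bounded linear operator satisfying $T^*(c_0^*) \supseteq B$. -/
open NormedSpace
open scoped ZeroAtInfty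

theorem summable_boundary_operator_to_c0
    {X : Type*} [NormedAddCommGroup X] [NormedSpace ℝ X] [CompleteSpace X]
    [TopologicalSpace.SeparableSpace X]
    (x : ℕ → X) (xs : ℕ → StrongDual ℝ X)
    -- normalized M-basis with biorthogonal functionals
    (hxnorm : ∀ i, ‖x i‖ = 1)
    (hbiorth : ∀ i j, xs j (x i) = if i = j then 1 else 0)
    (hdense : DenseRange fun c : ℕ →₀ ℝ => c.sum fun i r => r • x i)
    (hsep : ∀ v : X, (∀ i, xs i v = 0) → v = 0)
    -- bounded biorthogonal functionals
    (hbdd : ∃ M : ℝ, ∀ i, ‖xs i‖ ≤ M)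
    -- a boundary which is summable with respect to the M-basis
    (B : Set (StrongDual ℝ X)) (hB : IsBoundary B)
    (hsum : ∀ f ∈ B, Summable fun i => |f (x i)|) :
    ∃ T : X →L[ℝ] C₀(ℕ, ℝ),
      (∀ (v : X) (i : ℕ), T v i = xs i v) ∧
      B ⊆ Set.range (fun g : StrongDual ℝ C₀(ℕ, ℝ) => g.comp T) := by
  obtain ⟨M, hM⟩ := hbdd
  have hM0 : 0 ≤ M := le_trans (norm_nonneg _) (hM 0)
  -- evaluation of `xs i` on finitely supported combinations
  have key : ∀ (c : ℕ →₀ ℝ) (i : ℕ), xs i (c.sum fun j r => r • x j) = c i := by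
    intro c i
    rw [map_finsuppSum]
    simp only [map_smul, hbiorth, smul_eq_mul, mul_ite, mul_one, mul_zero]
    rw [Finsupp.sum_ite_eq' c i (fun _ r => r)]
    split_ifs with h
    · rfl
    · exact (Finsupp.notMem_support_iff.mp h).symm
  -- the coordinates tend to zero
  have hzero : ∀ v : X, Filter.Tendsto (fun i => xs i v) Filter.cofinite (nhds 0) := by
    intro v
    rw [NormedAddCommGroup.tendsto_nhds_zero]
    intro ε hε
    obtain ⟨c, hc⟩ := hdense.exists_dist_lt v (div_pos hε (by linarith : (0:ℝ) < M + 1))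
    refine Filter.eventually_cofinite.mpr (Set.Finite.subset c.support.finite_toSet ?_)
    intro i hi
    simp only [Set.mem_setOf_eq, not_lt] at hi
    by_contra hmem
    have hci : c i = 0 := Finsupp.notMem_support_iff.mp (by simpa using hmem)
    have : xs i v = xs i (v - c.sum fun j r => r • x j) := by
      rw [map_sub, key, hci, sub_zero]
    have hb : ‖xs i v‖ ≤ M * dist v (c.sum fun j r => r • x j) := by
      rw [this, dist_eq_norm]
      exact le_trans ((xs i).le_opNorm _) (by gcongr; exact hM i)
    have hd : dist v (c.sum fun j r => r • x j) < ε / (M + 1) := hc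
    have : ‖xs i v‖ < ε := by
      calc ‖xs i v‖ ≤ M * dist v (c.sum fun j r => r • x j) := hb
        _ ≤ (M + 1) * dist v (c.sum fun j r => r • x j) :=
            mul_le_mul_of_nonneg_right (by linarith) dist_nonneg
        _ < (M + 1) * (ε / (M + 1)) := by
            exact (mul_lt_mul_iff_right₀ (by linarith)).mpr hd
        _ = ε := by field_simp
    exact absurd this (not_lt.mpr hi)
  have hyle : ∀ (y : C₀(ℕ, ℝ)) (i : ℕ), ‖y i‖ ≤ ‖y‖ := fun y i => by
    rw [← ZeroAtInftyContinuousMap.norm_toBCF_eq_norm]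
    exact BoundedContinuousFunction.norm_coe_le_norm y.toBCF i
  -- build T
  let Tfun : X → C₀(ℕ, ℝ) := fun v =>
    { toFun := fun i => xs i v
      continuous_toFun := continuous_of_discreteTopology
      zero_at_infty' := by rw [Filter.cocompact_eq_cofinite]; exact hzero v }
  have Tapp : ∀ (v : X) (i : ℕ), Tfun v i = xs i v := fun v i => rfl
  let Tlin : X →ₗ[ℝ] C₀(ℕ, ℝ) :=
    { toFun := Tfun
      map_add' := by intro a b; ext i; simp [Tapp]
      map_smul' := by intro r a; ext i; simp [Tapp] }
  have Tbound : ∀ v : X, ‖Tlin v‖ ≤ M * ‖v‖ := by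
    intro v
    rw [← ZeroAtInftyContinuousMap.norm_toBCF_eq_norm]
    refine (BoundedContinuousFunction.norm_le (by positivity)).mpr ?_
    intro i
    exact le_trans ((xs i).le_opNorm v) (by gcongr; exact hM i)
  let T : X →L[ℝ] C₀(ℕ, ℝ) := Tlin.mkContinuous M Tbound
  refine ⟨T, fun v i => rfl, ?_⟩
  -- every f ∈ B factors through T
  intro f hf
  have hsumf := hsum f hf
  have hsummand : ∀ y : C₀(ℕ, ℝ), Summable fun i => f (x i) * y i := by
    intro y
    refine Summable.of_norm_bounded (hsumf.mul_right ‖y‖) ?_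
    intro i
    rw [norm_mul, Real.norm_eq_abs]
    gcongr
    exact hyle y i
  let glin : C₀(ℕ, ℝ) →ₗ[ℝ] ℝ :=
    { toFun := fun y => ∑' i, f (x i) * y i
      map_add' := by
        intro a b
        simp only [ZeroAtInftyContinuousMap.coe_add, Pi.add_apply, mul_add]
        exact Summable.tsum_add (hsummand a) (hsummand b)
      map_smul' := by
        intro r a
        simp only [ZeroAtInftyContinuousMap.coe_smul, Pi.smul_apply, smul_eq_mul,
          RingHom.id_apply]
        rw [← tsum_mul_left]
        congr 1
        ext i
        ring }
  have gbound : ∀ y : C₀(ℕ, ℝ), ‖glin y‖ ≤ (∑' i, |f (x i)|) * ‖y‖ := by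
    intro y
    have h1 : ‖glin y‖ ≤ ∑' i, ‖f (x i) * y i‖ :=
      norm_tsum_le_tsum_norm (by simpa [abs_mul] using (hsummand y).abs)
    refine h1.trans ?_
    rw [← tsum_mul_right]
    refine Summable.tsum_le_tsum (fun i => ?_) (by simpa [abs_mul] using (hsummand y).abs)
      (hsumf.mul_right ‖y‖)
    rw [norm_mul, Real.norm_eq_abs]
    gcongr
    exact hyle y i
  let g : StrongDual ℝ C₀(ℕ, ℝ) := glin.mkContinuous _ gbound
  refine ⟨g, ?_⟩
  -- show g ∘ T = f, by density
  have heq : (g : C₀(ℕ, ℝ) → ℝ) ∘ T = (f : X → ℝ) := by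
    refine hdense.equalizer (g.continuous.comp T.continuous) f.continuous (funext fun c => ?_)
    show g (T (c.sum fun j r => r • x j)) = f (c.sum fun j r => r • x j)
    have hTc : ∀ i, (T (c.sum fun j r => r • x j)) i = c i := fun i => key c i
    have : g (T (c.sum fun j r => r • x j)) = ∑' i, f (x i) * c i := by
      show (∑' i, f (x i) * (T (c.sum fun j r => r • x j)) i) = _
      congr 1; ext i; rw [hTc]
    rw [this, tsum_eq_sum (s := c.support)
      (fun i hi => by rw [Finsupp.notMem_support_iff.mp hi, mul_zero])]
    rw [map_finsuppSum, Finsupp.sum]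
    exact Finset.sum_congr rfl fun i _ => by rw [map_smul, smul_eq_mul, mul_comm]
  ext v
  exact congrFun heq v
end
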